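/- arXiv:1312.3798 — 11 statements merged into one kernel-verified Lean document; each statement's English description precedes it below -/
import Mathlib

section
/- Let α₁, α₂ ∈ ℝ be incommensurable, i.e. α₁ℤ ∩ α₂ℤ = {0}. Then every function f : ℝ → ℝ satisfying Δ_{α₁}Δ_{α₂} f = 0 can be written as f = f₁ + f₂ where f₁ is α₁-periodic and f₂ is α₂-periodic. -/
/-!
`g = Δ_{α₂} f` is `α₁`-periodic, so it is a function on `ℝ/α₁ℤ`, in which `α₂` has infinite order
by incommensurability. Each orbit of translation by `α₂` is then a copy of `ℤ`, and summing `g`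
along it from a chosen base point gives an `α₁`-periodic `f₁` with `Δ_{α₂} f₁ = g`; hence
`f₂ = f - f₁` is `α₂`-periodic.
-/

def deltaOp (α : ℝ) (f : ℝ → ℝ) : ℝ → ℝ := fun x => f (x + α) - f x

open Finset

noncomputable def Int.partialSum {M : Type*} [AddCommGroup M] (h : ℤ → M) (k : ℤ) : M :=
  ∑ i ∈ Ico 0 k, h i - ∑ i ∈ Ico k 0, h i

theorem Int.partialSum_add_one {M : Type*} [AddCommGroup M] (h : ℤ → M) (k : ℤ) :
    Int.partialSum h (k + 1) = Int.partialSum h k + h k := by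
  unfold Int.partialSum
  rcases le_or_gt 0 k with hk | hk
  · rw [← sum_Ico_add_eq_sum_Ico_add_one hk, Ico_eq_empty_of_le hk,
      Ico_eq_empty_of_le (by omega : (0 : ℤ) ≤ k + 1)]
    simp
  · rw [← insert_Ico_add_one_left_eq_Ico hk, sum_insert (by simp), Ico_eq_empty_of_le hk.le,
      Ico_eq_empty_of_le (by omega : k + 1 ≤ (0 : ℤ))]
    abel

theorem exists_add_eq_add_of_not_isOfFinAddOrder {Q M : Type*} [AddGroup Q] [AddCommGroup M]
    {a : Q} (ha : ¬IsOfFinAddOrder a) (g : Q → M) :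
    ∃ F : Q → M, ∀ q, F (q + a) = F q + g q := by
  set r : Q → Q := fun q => (q : Q ⧸ AddSubgroup.zmultiples a).out
  have hr : ∀ q, -r q + q ∈ AddSubgroup.zmultiples a := fun q =>
    QuotientAddGroup.eq.mp (QuotientAddGroup.out_eq' (q : Q ⧸ AddSubgroup.zmultiples a))
  choose k hk using hr
  have hr_add : ∀ q, r (q + a) = r q := fun q => by
    simp only [r]
    congr 1
    exact (QuotientAddGroup.eq.mpr (by simp)).symm
  have hk_add : ∀ q, k (q + a) = k q + 1 := fun q =>
    injective_zsmul_iff_not_isOfFinAddOrder.mpr ha <| by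
      simp only [add_zsmul, one_zsmul, hk, hr_add, add_assoc]
  refine ⟨fun q => Int.partialSum (fun j => g (r q + j • a)) (k q), fun q => ?_⟩
  simp only [hr_add, hk_add, Int.partialSum_add_one, hk, add_neg_cancel_left]

theorem AddCircle.not_isOfFinAddOrder_coe {α₁ α₂ : ℝ}
    (hinc : {x : ℝ | ∃ m : ℤ, x = m * α₁} ∩ {x : ℝ | ∃ k : ℤ, x = k * α₂} = {0})
    (hα₂ : α₂ ≠ 0) : ¬IsOfFinAddOrder (α₂ : AddCircle α₁) := by
  rw [isOfFinAddOrder_iff_zsmul_eq_zero]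
  rintro ⟨n, hn, hzero⟩
  obtain ⟨m, hm⟩ := (AddCircle.coe_eq_zero_iff α₁).mp (by rwa [AddCircle.coe_zsmul])
  have hmem : (n : ℝ) * α₂ ∈ ({0} : Set ℝ) :=
    hinc ▸ ⟨⟨m, by simpa [zsmul_eq_mul] using hm.symm⟩, ⟨n, rfl⟩⟩
  exact mul_ne_zero (Int.cast_ne_zero.mpr hn) hα₂ hmem

theorem stmt_0 (α₁ α₂ : ℝ)
    (hinc : {x : ℝ | ∃ m : ℤ, x = m * α₁} ∩ {x : ℝ | ∃ k : ℤ, x = k * α₂} = {0})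
    (f : ℝ → ℝ) (hf : deltaOp α₁ (deltaOp α₂ f) = 0) :
    ∃ f₁ f₂ : ℝ → ℝ, (∀ x, f₁ (x + α₁) = f₁ x) ∧ (∀ x, f₂ (x + α₂) = f₂ x) ∧
      ∀ x, f x = f₁ x + f₂ x := by
  rcases eq_or_ne α₂ 0 with rfl | hα₂
  · exact ⟨0, f, fun _ => rfl, fun x => by simp, fun x => by simp⟩
  have hg : Function.Periodic (deltaOp α₂ f) α₁ := fun x => sub_eq_zero.mp (congrFun hf x)
  obtain ⟨F, hF⟩ := exists_add_eq_add_of_not_isOfFinAddOrder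
    (AddCircle.not_isOfFinAddOrder_coe hinc hα₂) hg.lift
  refine ⟨fun x => F x, fun x => f x - F x, fun x => by simp, fun x => ?_, fun x => by ring⟩
  have hF_step : F ↑(x + α₂) = F x + deltaOp α₂ f x := by
    rw [AddCircle.coe_add, hF, hg.lift_coe]
  simp only [hF_step, deltaOp]
  ring
end

section
/- Let n ≥ 1, let α₁, …, αₙ ∈ ℝ, and let f : ℝ → ℝ be a uniformly almost periodic function, i.e. f is bounded and continuous and the set of translates {x ↦ f(x + t) : t ∈ ℝ} is relatively compact in the supremum norm. If Δ_{α₁}⋯Δ_{αₙ} f = 0, then there exist continuous functions f₁, …, fₙ : ℝ → ℝ with fⱼ αⱼ-periodic for each j and f = f₁ + ⋯ + fₙ. -/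
/-!
A Banach limit `m`, a shift-invariant mean on bounded sequences (here the ultralimit of Cesàro
means), turns a bounded function `h` into the `α`-periodic function `x ↦ m (k ↦ h (x + kα))`.
This averaging is linear, commutes with every difference operator, fixes `α`-periodic functions
and preserves uniform continuity. If `Δ_{α₀} Δ_{α₁} ⋯ Δ_{αₙ} f = 0`, then `Δ_{α₁} ⋯ Δ_{αₙ} f` is
`α₀`-periodic, hence fixed by the `α₀`-average `A` of `f`; so `Δ_{α₁} ⋯ Δ_{αₙ} (f - A) = 0` and
induction on `n` applies to `f - A`. Compactness of the translates enters through the uniform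
continuity of `f`, which the averages inherit and which makes the periodic summands continuous.
-/

open Filter Topology BoundedContinuousFunction

noncomputable section

def cesaroMean : (ℕ → ℝ) →ₗ[ℝ] (ℕ → ℝ) where
  toFun u N := (N : ℝ)⁻¹ * ∑ k ∈ Finset.range N, u k
  map_add' u v := by ext N; simp only [Pi.add_apply, Finset.sum_add_distrib, mul_add]
  map_smul' c u := by
    ext N
    simp only [Pi.smul_apply, smul_eq_mul, ← Finset.mul_sum, RingHom.id_apply, mul_left_comm]

lemma cesaroMean_apply (u : ℕ → ℝ) (N : ℕ) :
    cesaroMean u N = (N : ℝ)⁻¹ * ∑ k ∈ Finset.range N, u k := rfl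

lemma cesaroMean_le {u : ℕ → ℝ} {C : ℝ} (hC : ∀ k, u k ≤ C) {N : ℕ} (hN : N ≠ 0) :
    cesaroMean u N ≤ C := by
  have hN' : (0 : ℝ) < N := by positivity
  calc cesaroMean u N ≤ (N : ℝ)⁻¹ * ∑ _k ∈ Finset.range N, C := by
        rw [cesaroMean_apply]; gcongr with k; exact hC k
    _ = C := by simp [field]

lemma abs_cesaroMean_le {u : ℕ → ℝ} {C : ℝ} (hC : ∀ k, |u k| ≤ C) (N : ℕ) :
    |cesaroMean u N| ≤ C := by
  rcases eq_or_ne N 0 with rfl | hN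
  · simpa [cesaroMean_apply] using (abs_nonneg _).trans (hC 0)
  · rw [abs_le]
    constructor
    · have := cesaroMean_le (u := -u) (fun k => neg_le.mp (abs_le.mp (hC k)).1) hN
      rw [map_neg, Pi.neg_apply] at this
      linarith
    · exact cesaroMean_le (fun k => (abs_le.mp (hC k)).2) hN

lemma cesaroMean_shift_sub (u : ℕ → ℝ) (N : ℕ) :
    cesaroMean (fun k => u (k + 1)) N - cesaroMean u N = (u N - u 0) / N := by
  rw [cesaroMean_apply, cesaroMean_apply, ← mul_sub, ← Finset.sum_sub_distrib,
    Finset.sum_range_sub, div_eq_inv_mul]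

lemma tendsto_cesaroMean_shift_sub {u : ℕ → ℝ} {C : ℝ} (hC : ∀ k, |u k| ≤ C) :
    Tendsto (fun N => cesaroMean (fun k => u (k + 1)) N - cesaroMean u N) atTop (𝓝 0) := by
  simp_rw [cesaroMean_shift_sub]
  refine squeeze_zero_norm (fun N => ?_) (tendsto_const_div_atTop_nhds_zero_nat (2 * C))
  rw [Real.norm_eq_abs, abs_div, Nat.abs_cast]
  gcongr
  calc |u N - u 0| ≤ |u N| + |u 0| := abs_sub _ _
    _ ≤ 2 * C := by linarith [hC N, hC 0]

lemma exists_tendsto_ultrafilter_of_abs_le {ι : Type*} (𝒰 : Ultrafilter ι) {v : ι → ℝ} {C : ℝ}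
    (hC : ∀ i, |v i| ≤ C) : ∃ a, Tendsto v 𝒰 (𝓝 a) := by
  obtain ⟨a, -, ha⟩ := (isCompact_Icc (a := -C) (b := C)).ultrafilter_le_nhds (𝒰.map v)
    (by
      rw [Ultrafilter.coe_map]
      exact tendsto_principal.mpr (.of_forall fun i => abs_le.mp (hC i)))
  exact ⟨a, by rwa [Ultrafilter.coe_map] at ha⟩

lemma tendsto_hyperfilter_atTop : Tendsto id (hyperfilter ℕ : Filter ℕ) atTop :=
  hyperfilter_le_cofinite.trans Nat.cofinite_eq_atTop.le

lemma tendsto_limUnder_cesaroMean (u : ℕ →ᵇ ℝ) :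
    Tendsto (cesaroMean u) (hyperfilter ℕ)
      (𝓝 (limUnder (hyperfilter ℕ : Filter ℕ) (cesaroMean u))) :=
  tendsto_nhds_limUnder (exists_tendsto_ultrafilter_of_abs_le _ (abs_cesaroMean_le
    fun k => (Real.norm_eq_abs _).symm.trans_le (u.norm_coe_le_norm k)))

def hyperCesaro : (ℕ →ᵇ ℝ) →ₗ[ℝ] ℝ where
  toFun u := limUnder (hyperfilter ℕ : Filter ℕ) (cesaroMean u)
  map_add' u v := by
    simp only [coe_add, map_add]
    exact ((tendsto_limUnder_cesaroMean u).add (tendsto_limUnder_cesaroMean v)).limUnder_eq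
  map_smul' c u := by
    show limUnder _ (cesaroMean (c • ⇑u)) = c • _
    rw [map_smul]
    exact ((tendsto_limUnder_cesaroMean u).const_smul c).limUnder_eq

lemma hyperCesaro_le {u : ℕ →ᵇ ℝ} {C : ℝ} (hC : ∀ k, u k ≤ C) : hyperCesaro u ≤ C :=
  le_of_tendsto (tendsto_limUnder_cesaroMean u) <|
    (tendsto_hyperfilter_atTop.eventually_ne_atTop 0).mono fun _ hN => cesaroMean_le hC hN

lemma hyperCesaro_shift {u v : ℕ →ᵇ ℝ} (hv : ∀ k, v k = u (k + 1)) :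
    hyperCesaro v = hyperCesaro u := by
  have hvu : Tendsto (cesaroMean v - cesaroMean u) (hyperfilter ℕ) (𝓝 0) := by
    rw [show ⇑v = fun k => u (k + 1) from funext hv]
    exact (tendsto_cesaroMean_shift_sub fun k =>
      (Real.norm_eq_abs _).symm.trans_le (u.norm_coe_le_norm k)).comp tendsto_hyperfilter_atTop
  rw [← sub_eq_zero]
  exact ((tendsto_limUnder_cesaroMean v).sub (tendsto_limUnder_cesaroMean u)).limUnder_eq.symm.trans
    hvu.limUnder_eq

/-- Defined on all sequences, so that means along orbits are linear in the function without any
boundedness side condition; only the values on bounded sequences are constrained. -/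
structure IsBanachLimit (m : (ℕ → ℝ) →ₗ[ℝ] ℝ) : Prop where
  le_of_forall_le {u : ℕ → ℝ} {C : ℝ} : (∃ D, ∀ k, |u k| ≤ D) → (∀ k, u k ≤ C) → m u ≤ C
  map_shift {u : ℕ → ℝ} : (∃ D, ∀ k, |u k| ≤ D) → m (fun k => u (k + 1)) = m u

theorem exists_isBanachLimit : ∃ m, IsBanachLimit m := by
  let coeFn : (ℕ →ᵇ ℝ) →ₗ[ℝ] (ℕ → ℝ) :=
    { toFun := (⇑), map_add' := fun _ _ => rfl, map_smul' := fun _ _ => rfl }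
  obtain ⟨r, hr⟩ := coeFn.exists_leftInverse_of_injective
    (LinearMap.ker_eq_bot.mpr DFunLike.coe_injective)
  have lift : ∀ {u : ℕ → ℝ}, (∃ D, ∀ k, |u k| ≤ D) →
      ∃ b : ℕ →ᵇ ℝ, ⇑b = u ∧ (hyperCesaro ∘ₗ r) u = hyperCesaro b := by
    rintro u ⟨D, hD⟩
    refine ⟨ofNormedAddCommGroupDiscrete u D hD, rfl, ?_⟩
    rw [LinearMap.comp_apply]
    exact congrArg hyperCesaro (LinearMap.congr_fun hr (ofNormedAddCommGroupDiscrete u D hD))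
  refine ⟨hyperCesaro ∘ₗ r, fun hu hC => ?_, fun {u} hu => ?_⟩
  · obtain ⟨b, rfl, hb⟩ := lift hu
    exact hb ▸ hyperCesaro_le hC
  · obtain ⟨b, rfl, hb⟩ := lift hu
    obtain ⟨D, hD⟩ := hu
    obtain ⟨b', hb'u, hb'⟩ := lift (u := fun k => b (k + 1)) ⟨D, fun k => hD (k + 1)⟩
    rw [hb, hb', hyperCesaro_shift (congrFun hb'u)]

def orbitMean (m : (ℕ → ℝ) →ₗ[ℝ] ℝ) (α : ℝ) (h : ℝ → ℝ) (x : ℝ) : ℝ :=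
  m fun k => h (x + k * α)

lemma orbitMean_deltaOp (m : (ℕ → ℝ) →ₗ[ℝ] ℝ) (α β : ℝ) (h : ℝ → ℝ) :
    orbitMean m α (deltaOp β h) = deltaOp β (orbitMean m α h) := by
  ext x
  simp only [orbitMean, deltaOp, ← map_sub, add_right_comm x]
  rfl

lemma deltaOp_eq_zero_iff {β : ℝ} {h : ℝ → ℝ} : deltaOp β h = 0 ↔ Function.Periodic h β := by
  simp only [funext_iff, deltaOp, Pi.zero_apply, sub_eq_zero, Function.Periodic]

lemma deltaOp_sub (β : ℝ) (h₁ h₂ : ℝ → ℝ) :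
    deltaOp β (h₁ - h₂) = deltaOp β h₁ - deltaOp β h₂ := by
  ext x
  simp only [deltaOp, Pi.sub_apply]
  ring

lemma foldr_deltaOp_sub (l : List ℝ) (h₁ h₂ : ℝ → ℝ) :
    l.foldr deltaOp (h₁ - h₂) = l.foldr deltaOp h₁ - l.foldr deltaOp h₂ := by
  induction l with
  | nil => rfl
  | cons β l ih => simp only [List.foldr_cons, ih, deltaOp_sub]

lemma foldr_deltaOp_orbitMean (m : (ℕ → ℝ) →ₗ[ℝ] ℝ) (α : ℝ) (h : ℝ → ℝ) (l : List ℝ) :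
    l.foldr deltaOp (orbitMean m α h) = orbitMean m α (l.foldr deltaOp h) := by
  induction l with
  | nil => rfl
  | cons β l ih => simp only [List.foldr_cons, ih, orbitMean_deltaOp]

namespace IsBanachLimit

variable {m : (ℕ → ℝ) →ₗ[ℝ] ℝ} (hm : IsBanachLimit m) {α : ℝ} {h : ℝ → ℝ}
include hm

lemma map_const (c : ℝ) : m (fun _ => c) = c := by
  have hbdd : ∃ D, ∀ _ : ℕ, |c| ≤ D := ⟨|c|, fun _ => le_rfl⟩
  have hle := hm.le_of_forall_le hbdd fun _ => le_rfl
  have hge := hm.le_of_forall_le (u := -fun _ => c) (C := -c) (by simpa using hbdd)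
    fun _ => le_rfl
  rw [map_neg] at hge
  linarith

lemma abs_le_of_forall_abs_le {u : ℕ → ℝ} {C : ℝ} (hC : ∀ k, |u k| ≤ C) : |m u| ≤ C := by
  have hle := hm.le_of_forall_le ⟨C, hC⟩ fun k => (abs_le.mp (hC k)).2
  have hge := hm.le_of_forall_le (u := -u) ⟨C, by simpa using hC⟩
    fun k => neg_le.mp (abs_le.mp (hC k)).1
  rw [map_neg] at hge
  exact abs_le.mpr ⟨by linarith, hle⟩

lemma abs_orbitMean_le {C : ℝ} (hC : ∀ y, |h y| ≤ C) (x : ℝ) : |orbitMean m α h x| ≤ C :=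
  hm.abs_le_of_forall_abs_le fun _ => hC _

lemma periodic_orbitMean (hb : ∃ C, ∀ y, |h y| ≤ C) : Function.Periodic (orbitMean m α h) α := by
  intro x
  obtain ⟨C, hC⟩ := hb
  rw [orbitMean, orbitMean, ← hm.map_shift (u := fun k => h (x + k * α)) ⟨C, fun _ => hC _⟩]
  congr! 2 with k
  rw [Nat.cast_succ]
  congr 1
  ring

lemma orbitMean_eq_self (hper : Function.Periodic h α) : orbitMean m α h = h := by
  ext x
  simp only [orbitMean, hper.nat_mul _ x, hm.map_const]

lemma uniformContinuous_orbitMean (huc : UniformContinuous h) :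
    UniformContinuous (orbitMean m α h) := by
  rw [Metric.uniformContinuous_iff] at huc ⊢
  intro ε hε
  obtain ⟨δ, hδ, hδε⟩ := huc (ε / 2) (half_pos hε)
  refine ⟨δ, hδ, fun {x y} hxy => ?_⟩
  have hk : ∀ k : ℕ, |h (x + k * α) - h (y + k * α)| ≤ ε / 2 := fun k =>
    (hδε (by simpa [Real.dist_eq] using hxy)).le
  calc dist (orbitMean m α h x) (orbitMean m α h y)
      = |m ((fun k : ℕ => h (x + k * α)) - fun k : ℕ => h (y + k * α))| := by
        rw [map_sub, Real.dist_eq, orbitMean, orbitMean]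
    _ ≤ ε / 2 := hm.abs_le_of_forall_abs_le hk
    _ < ε := half_lt_self hε

end IsBanachLimit

theorem exists_sum_periodic_of_foldr_deltaOp_eq_zero {n : ℕ} (α : Fin n → ℝ) {f : ℝ → ℝ}
    (huc : UniformContinuous f) (hb : ∃ C, ∀ x, |f x| ≤ C)
    (hdiff : (List.ofFn α).foldr deltaOp f = 0) :
    ∃ g : Fin n → ℝ → ℝ, (∀ j, UniformContinuous (g j)) ∧
      (∀ j, Function.Periodic (g j) (α j)) ∧ ∀ x, f x = ∑ j, g j x := by
  obtain ⟨m, hm⟩ := exists_isBanachLimit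
  induction n generalizing f with
  | zero =>
    refine ⟨Fin.elim0, (·.elim0), (·.elim0), fun x => ?_⟩
    simpa using congrFun hdiff x
  | succ n ih =>
    rw [List.ofFn_succ, List.foldr_cons, deltaOp_eq_zero_iff] at hdiff
    set A := orbitMean m (α 0) f
    obtain ⟨C, hC⟩ := hb
    have hA : ∀ x, |A x| ≤ C := hm.abs_orbitMean_le hC
    have htail : (List.ofFn fun i : Fin n => α i.succ).foldr deltaOp (f - A) = 0 := by
      rw [foldr_deltaOp_sub, foldr_deltaOp_orbitMean, hm.orbitMean_eq_self hdiff, sub_self]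
    obtain ⟨g, hguc, hgper, hgsum⟩ := ih (fun i => α i.succ)
      (huc.sub (hm.uniformContinuous_orbitMean huc))
      ⟨2 * C, fun x => (abs_sub _ _).trans (by linarith [hC x, hA x])⟩ htail
    refine ⟨Fin.cons A g, Fin.cases (hm.uniformContinuous_orbitMean huc) hguc,
      Fin.cases (hm.periodic_orbitMean ⟨C, hC⟩) hgper, fun x => ?_⟩
    rw [Fin.sum_univ_succ, Fin.cons_zero]
    simp only [Fin.cons_succ, ← hgsum x]
    exact (add_sub_cancel (A x) (f x)).symm

/-- Compactness upgrades the pointwise continuity of `t ↦ f (· + t)` to continuity in the sup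
norm: on the compact closure of the translates, the uniform topology agrees with the (Hausdorff)
topology of pointwise convergence. -/
theorem uniformContinuous_of_isCompact_closure_translates {G : Type*} [SeminormedAddCommGroup G]
    {f : G → ℝ} (hcont : Continuous f) (hbdd : ∃ C : ℝ, ∀ x, |f x| ≤ C)
    (hcpt : IsCompact (closure {g : G →ᵇ ℝ | ∃ t : G, ∀ x, g x = f (x + t)})) :
    UniformContinuous f := by
  obtain ⟨C, hC⟩ := hbdd
  set K := closure {g : G →ᵇ ℝ | ∃ t : G, ∀ x, g x = f (x + t)}
  have : CompactSpace K := isCompact_iff_compactSpace.mp hcpt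
  let translate (t : G) : K :=
    ⟨ofNormedAddCommGroup (fun x => f (x + t)) (hcont.comp (continuous_add_const t)) C
      (fun x => hC (x + t)), subset_closure ⟨t, fun _ => rfl⟩⟩
  have hemb : IsClosedEmbedding fun g : K => (⇑g.1 : G → ℝ) :=
    (continuous_pi fun x => (continuous_eval_const x).comp continuous_subtype_val).isClosedEmbedding
      (DFunLike.coe_injective.comp Subtype.val_injective)
  have htranslate : Continuous translate := hemb.isInducing.continuous_iff.mpr <|
    continuous_pi fun x => hcont.comp (continuous_const.add continuous_id)
  rw [Metric.uniformContinuous_iff]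
  intro ε hε
  obtain ⟨δ, hδ, hδε⟩ := Metric.continuousAt_iff.mp (htranslate.continuousAt (x := 0)) ε hε
  refine ⟨δ, hδ, fun {a b} hab => ?_⟩
  have h := (dist_coe_le_dist (f := (translate (a - b)).1) (g := (translate 0).1) b).trans_lt
    (hδε (by rwa [dist_zero_right, ← dist_eq_norm]))
  simpa [translate] using h

end

theorem stmt_2_general (n : ℕ) (α : Fin n → ℝ) (f : ℝ → ℝ)
    (hcont : Continuous f) (hbdd : ∃ C : ℝ, ∀ x, |f x| ≤ C)
    (hcpt : IsCompact (closure
      {g : BoundedContinuousFunction ℝ ℝ | ∃ t : ℝ, ∀ x, g x = f (x + t)}))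
    (hdiff : (List.ofFn α).foldr deltaOp f = 0) :
    ∃ g : Fin n → ℝ → ℝ, (∀ j, Continuous (g j)) ∧ (∀ j x, g j (x + α j) = g j x) ∧
      ∀ x, f x = ∑ j, g j x := by
  obtain ⟨g, hguc, hgper, hgsum⟩ := exists_sum_periodic_of_foldr_deltaOp_eq_zero α
    (uniformContinuous_of_isCompact_closure_translates hcont hbdd hcpt) hbdd hdiff
  exact ⟨g, fun j => (hguc j).continuous, hgper, hgsum⟩

theorem stmt_2 (n : ℕ) (hn : 1 ≤ n) (α : Fin n → ℝ) (f : ℝ → ℝ)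
    (hcont : Continuous f) (hbdd : ∃ C : ℝ, ∀ x, |f x| ≤ C)
    (hcpt : IsCompact (closure
      {g : BoundedContinuousFunction ℝ ℝ | ∃ t : ℝ, ∀ x, g x = f (x + t)}))
    (hdiff : (List.ofFn α).foldr deltaOp f = 0) :
    ∃ g : Fin n → ℝ → ℝ, (∀ j, Continuous (g j)) ∧ (∀ j x, g j (x + α j) = g j x) ∧
      ∀ x, f x = ∑ j, g j x :=
  stmt_2_general n α f hcont hbdd hcpt hdiff
end

section
/- Let f : ℝ → ℝ be a bounded function, let α ∈ ℝ and n ∈ ℕ, n ≥ 1. If Δ_α^n f = 0 (the difference operator Δ_α applied n times to f is identically zero), then Δ_α f = 0, i.e. f is α-periodic. -/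
lemma deltaOp_eq_zero_iff_periodic {α : ℝ} {f : ℝ → ℝ} :
    deltaOp α f = 0 ↔ Function.Periodic f α := by
  simp only [funext_iff, deltaOp, Pi.zero_apply, sub_eq_zero, Function.Periodic]

lemma abs_deltaOp_le {α C : ℝ} {f : ℝ → ℝ} (hC : ∀ x, |f x| ≤ C) (x : ℝ) :
    |deltaOp α f x| ≤ 2 * C :=
  calc |f (x + α) - f x| ≤ |f (x + α)| + |f x| := abs_sub _ _
    _ ≤ 2 * C := by linarith [hC (x + α), hC x]

lemma add_nat_mul_sub_eq_of_deltaOp_deltaOp_eq_zero {α : ℝ} {h : ℝ → ℝ}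
    (h2 : deltaOp α (deltaOp α h) = 0) (x : ℝ) (k : ℕ) :
    h (x + k * α) - h x = k * deltaOp α h x := by
  have hper : Function.Periodic (deltaOp α h) α := deltaOp_eq_zero_iff_periodic.mp h2
  calc h (x + k * α) - h x
      = ∑ i ∈ Finset.range k, (h (x + (i + 1 : ℕ) * α) - h (x + i * α)) := by
        rw [Finset.sum_range_sub (fun i : ℕ => h (x + i * α))]
        simp
    _ = ∑ i ∈ Finset.range k, deltaOp α h (x + i * α) := by
        simp only [deltaOp, Nat.cast_succ, add_mul, one_mul, add_assoc]
    _ = k * deltaOp α h x := by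
        rw [Finset.sum_congr rfl fun i _ => hper.nat_mul i x]
        simp

lemma eq_zero_of_forall_abs_nat_mul_le {a B : ℝ} (h : ∀ k : ℕ, |k * a| ≤ B) : a = 0 := by
  by_contra ha
  obtain ⟨k, hk⟩ := exists_nat_gt (B / |a|)
  rw [div_lt_iff₀ (abs_pos.mpr ha)] at hk
  have hkB := h k
  rw [abs_mul, Nat.abs_cast] at hkB
  linarith

lemma deltaOp_eq_zero_of_deltaOp_deltaOp_eq_zero {α C : ℝ} {h : ℝ → ℝ} (hC : ∀ x, |h x| ≤ C)
    (h2 : deltaOp α (deltaOp α h) = 0) : deltaOp α h = 0 :=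
  funext fun x => eq_zero_of_forall_abs_nat_mul_le fun k => by
    rw [← add_nat_mul_sub_eq_of_deltaOp_deltaOp_eq_zero h2]
    exact abs_deltaOp_le (α := k * α) hC x

lemma deltaOp_eq_zero_of_iterate_eq_zero {α C : ℝ} {f : ℝ → ℝ} (hC : ∀ x, |f x| ≤ C) (n : ℕ)
    (hf : (deltaOp α)^[n + 1] f = 0) : deltaOp α f = 0 := by
  induction n generalizing f C with
  | zero => simpa using hf
  | succ n ih =>
    rw [Function.iterate_succ_apply] at hf
    exact deltaOp_eq_zero_of_deltaOp_deltaOp_eq_zero hC (ih (abs_deltaOp_le hC) hf)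

theorem stmt_5 (f : ℝ → ℝ) (hbdd : ∃ C : ℝ, ∀ x, |f x| ≤ C) (α : ℝ)
    (n : ℕ) (hn : 1 ≤ n) (hf : (deltaOp α)^[n] f = 0) :
    ∀ x, f (x + α) = f x := by
  obtain ⟨C, hC⟩ := hbdd
  obtain ⟨m, rfl⟩ := Nat.exists_eq_add_of_le' hn
  exact deltaOp_eq_zero_iff_periodic.mp (deltaOp_eq_zero_of_iterate_eq_zero hC m hf)
end

section
/- Let β, γ ∈ ℝ be nonzero and incommensurable (βℤ ∩ γℤ = {0}), and let g : ℝ → ℝ be continuous with Δ_β g = 0 (g is β-periodic). Then the following are equivalent: (i) there exists K > 0 such that |∑_{j=0}^{k−1} g(x + jγ)| ≤ K for all x ∈ ℝ and all k ∈ ℕ; (ii) there exists a continuous function h : ℝ → ℝ such that Δ_β h = 0 and Δ_γ h = g. -/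
/-!
Lift `g` to the circle `ℝ ⧸ |β|ℤ`, on which `x ↦ x + γ` is an irrational rotation, so every forward
orbit is dense. The forward implication is then the Gottschalk–Hedlund theorem: for a continuous
`G` over a map `T` with dense forward orbits on a compact Hausdorff space, bounded Birkhoff sums at
one point make the orbit of `(x₀, 0)` under the skew product `(x, t) ↦ (T x, t + G x)` stay in a
compact slab, so its closure contains a minimal closed invariant set `M`. Vertical translations
commute with the skew product, so a translate meeting `M` preserves `M`; compactness then forces
every fibre of `M` to be a single point, and minimality of `T` makes `M` project onto the whole
space. Thus `M` is the graph of a function `H`, continuous because the graph is compact, and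
invariance of `M` reads `H ∘ T = H + G`. The converse is a telescoping sum of a bounded function.
-/

open Set Function

section MinimalSet

variable {Y : Type*} [TopologicalSpace Y]

def IsMinimalSet (F : Y → Y) (M : Set Y) : Prop :=
  Minimal (fun N : Set Y => N.Nonempty ∧ IsClosed N ∧ MapsTo F N N) M

theorem exists_isMinimalSet_subset {F : Y → Y} {K : Set Y} (hKc : IsCompact K)
    (hKne : K.Nonempty) (hK : IsClosed K) (hKF : MapsTo F K K) :
    ∃ M ⊆ K, IsMinimalSet F M := by
  set S := {N | (N.Nonempty ∧ IsClosed N ∧ MapsTo F N N) ∧ N ⊆ K}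
  have hchain : ∀ c ⊆ S, IsChain (· ⊆ ·) c → c.Nonempty → ∃ lb ∈ S, ∀ N ∈ c, lb ⊆ N := by
    intro c hcS hc ⟨U, hU⟩
    have : Nonempty c := ⟨⟨U, hU⟩⟩
    have hclosed : ∀ V ∈ c, IsClosed V := fun V hV => (hcS hV).1.2.1
    refine ⟨⋂₀ c, ⟨⟨?_, isClosed_sInter hclosed, fun w hw V hV => (hcS hV).1.2.2 (hw V hV)⟩,
      (sInter_subset_of_mem hU).trans (hcS hU).2⟩, fun V hV => sInter_subset_of_mem hV⟩
    have hdir : DirectedOn (· ⊇ ·) c := fun U hU V hV =>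
      (hc.total hU hV).elim (fun h => ⟨U, hU, subset_rfl, h⟩) (fun h => ⟨V, hV, h, subset_rfl⟩)
    exact IsCompact.nonempty_sInter_of_directed_nonempty_isCompact_isClosed hdir
      (fun V hV => (hcS hV).1.1) (fun V hV => hKc.of_isClosed_subset (hclosed V hV) (hcS hV).2)
      hclosed
  obtain ⟨M, hMK, hM⟩ := zorn_superset_nonempty S hchain K ⟨⟨hKne, hK, hKF⟩, subset_rfl⟩
  exact ⟨M, hMK, hM.prop.1, fun N hN hNM => hM.le_of_le ⟨hN, hNM.trans hMK⟩ hNM⟩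

theorem IsMinimalSet.mapsTo_of_commute {F τ : Y → Y} {M : Set Y} (hM : IsMinimalSet F M)
    (hτ : Continuous τ) (hcomm : Function.Commute F τ) {z : Y} (hz : z ∈ M) (hτz : τ z ∈ M) :
    MapsTo τ M M := by
  obtain ⟨-, hMcl, hMF⟩ := hM.prop
  -- the points that `τ` maps into `M` form a closed invariant subset of `M`
  have hsub := hM.le_of_le (y := M ∩ τ ⁻¹' M)
    ⟨⟨z, hz, hτz⟩, hMcl.inter (hMcl.preimage hτ),
      fun w hw => ⟨hMF hw.1, (hcomm.eq w ▸ hMF hw.2 : τ (F w) ∈ M)⟩⟩ inter_subset_left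
  exact fun w hw => (hsub hw).2

end MinimalSet

theorem Function.Semiconj.image_eq_univ_of_dense_orbit {X Y : Type*} [TopologicalSpace X]
    [T2Space X] [TopologicalSpace Y] {π : Y → X} {F : Y → Y} {T : X → X} (hsc : Semiconj π F T)
    (hπ : Continuous π) (hT : ∀ x, Dense (range fun n : ℕ => T^[n] x)) {M : Set Y}
    (hMc : IsCompact M) (hMne : M.Nonempty) (hMF : MapsTo F M M) : π '' M = univ := by
  obtain ⟨z, hz⟩ := hMne
  refine eq_univ_of_univ_subset
    ((hT (π z)).closure_eq ▸ closure_minimal ?_ (hMc.image hπ).isClosed)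
  exact range_subset_iff.2 fun n => ⟨F^[n] z, hMF.iterate n hz, (hsc.iterate_right n).eq z⟩

theorem continuous_of_isCompact_graph {X Y : Type*} [TopologicalSpace X] [T2Space X]
    [TopologicalSpace Y] {H : X → Y} (hH : IsCompact (range fun x => (x, H x))) :
    Continuous H := by
  refine continuous_iff_isClosed.2 fun C hC => ?_
  have : H ⁻¹' C = Prod.fst '' ((range fun x => (x, H x)) ∩ Prod.snd ⁻¹' C) := by
    ext x; simp
  rw [this]
  exact ((hH.inter_right (hC.preimage continuous_snd)).image continuous_fst).isClosed

section SkewProduct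

variable {X : Type*} (T : X → X) (G : X → ℝ)

def skewProduct (p : X × ℝ) : X × ℝ := (T p.1, p.2 + G p.1)

theorem skewProduct_iterate (n : ℕ) (x : X) (t : ℝ) :
    (skewProduct T G)^[n] (x, t) = (T^[n] x, t + birkhoffSum T G n x) := by
  induction n with
  | zero => simp
  | succ n ih => simp [iterate_succ_apply', ih, skewProduct, birkhoffSum_succ, add_assoc]

variable {T G} [TopologicalSpace X]

theorem IsMinimalSet.skewProduct_snd_le {M : Set (X × ℝ)} (hM : IsMinimalSet (skewProduct T G) M)
    (hMc : IsCompact M) {x : X} {t₁ t₂ : ℝ} (h₁ : (x, t₁) ∈ M) (h₂ : (x, t₂) ∈ M) : t₂ ≤ t₁ := by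
  by_contra! h
  -- otherwise `M` is invariant under the vertical translation by `t₂ - t₁ > 0`, hence unbounded
  set τ : X × ℝ → X × ℝ := Prod.map id (· + (t₂ - t₁))
  have hτM : MapsTo τ M M := hM.mapsTo_of_commute (by fun_prop)
    (fun p => by simp [τ, skewProduct, add_right_comm]) h₁ (by simpa [τ] using h₂)
  obtain ⟨B, hB⟩ := hMc.bddAbove_image continuous_snd.continuousOn
  obtain ⟨n, hn⟩ := exists_lt_nsmul (sub_pos.2 h) (B - t₁)
  have hn_mem : (x, t₁ + n • (t₂ - t₁)) ∈ M := by
    simpa [τ, Prod.map_iterate] using hτM.iterate n h₁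
  have := hB ⟨_, hn_mem, rfl⟩
  simp only at this
  linarith

theorem gottschalk_hedlund [CompactSpace X] [T2Space X] (hT : Continuous T)
    (hTmin : ∀ x, Dense (range fun n : ℕ => T^[n] x)) (hG : Continuous G) {x₀ : X} {C : ℝ}
    (hC : ∀ n, |birkhoffSum T G n x₀| ≤ C) :
    ∃ H : X → ℝ, Continuous H ∧ ∀ x, H (T x) = H x + G x := by
  set F := skewProduct T G
  have hF : Continuous F := by unfold F skewProduct; fun_prop
  set Y := closure (range fun n => F^[n] (x₀, 0))
  have hYslab : Y ⊆ univ ×ˢ Icc (-C) C :=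
    closure_minimal
      (range_subset_iff.2 fun n => by simpa [F, skewProduct_iterate] using abs_le.1 (hC n))
      (isClosed_univ.prod isClosed_Icc)
  have hYc : IsCompact Y :=
    (isCompact_univ.prod isCompact_Icc).of_isClosed_subset isClosed_closure hYslab
  have hYF : MapsTo F Y Y := by
    refine MapsTo.closure ?_ hF
    rintro _ ⟨n, rfl⟩
    exact ⟨n + 1, iterate_succ_apply' F n _⟩
  obtain ⟨M, hMY, hM⟩ := exists_isMinimalSet_subset hYc ⟨_, subset_closure ⟨0, rfl⟩⟩
    isClosed_closure hYF
  have hMc : IsCompact M := hYc.of_isClosed_subset hM.prop.2.1 hMY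
  have hfiber {x t₁ t₂} (h₁ : (x, t₁) ∈ M) (h₂ : (x, t₂) ∈ M) : t₁ = t₂ :=
    le_antisymm (hM.skewProduct_snd_le hMc h₂ h₁) (hM.skewProduct_snd_le hMc h₁ h₂)
  have hproj : Prod.fst '' M = univ :=
    (show Semiconj Prod.fst F T from fun _ => rfl).image_eq_univ_of_dense_orbit continuous_fst
      hTmin hMc hM.prop.1 hM.prop.2.2
  have hsection (x : X) : ∃ t, (x, t) ∈ M := by
    obtain ⟨⟨x', t⟩, hm, rfl⟩ : x ∈ Prod.fst '' M := hproj ▸ mem_univ x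
    exact ⟨t, hm⟩
  choose H hH using hsection
  have hgraph : M = range fun x => (x, H x) := by
    ext ⟨x, t⟩
    refine ⟨fun hm => ⟨x, congrArg (x, ·) (hfiber (hH x) hm)⟩, ?_⟩
    rintro ⟨x, hx⟩
    exact hx ▸ hH x
  exact ⟨H, continuous_of_isCompact_graph (hgraph ▸ hMc),
    fun x => hfiber (hH (T x)) (hM.prop.2.2 (hH x))⟩

theorem Function.Semiconj.birkhoffSum_comp {α β M : Type*} [AddCommMonoid M] {π : α → β}
    {f : α → α} {T : β → β} (h : Semiconj π f T) (G : β → M) (n : ℕ) (x : α) :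
    birkhoffSum f (G ∘ π) n x = birkhoffSum T G n (π x) := by
  simp [birkhoffSum, (h.iterate_right _).eq]

theorem birkhoffSum_comp_sub {α M : Type*} [AddCommGroup M] (f : α → α) (h : α → M) (n : ℕ)
    (x : α) : birkhoffSum f (fun y => h (f y) - h y) n x = h (f^[n] x) - h x := by
  simp only [birkhoffSum, ← iterate_succ_apply' f]
  exact Finset.sum_range_sub (fun k => h (f^[k] x)) n

theorem birkhoffSum_add_right {M : Type*} [AddCommMonoid M] (γ : ℝ) (g : ℝ → M) (k : ℕ) (x : ℝ) :
    birkhoffSum (· + γ) g k x = ∑ j ∈ Finset.range k, g (x + j * γ) := by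
  simp [birkhoffSum, nsmul_eq_mul]

theorem Function.periodic_abs_iff {α β : Type*} [AddCommGroup α] [LinearOrder α]
    [IsOrderedAddMonoid α] {f : α → β} {c : α} : Periodic f |c| ↔ Periodic f c := by
  rcases abs_choice c with h | h <;> rw [h]
  exact ⟨fun hf => by simpa using hf.neg, Periodic.neg⟩

theorem irrational_div_of_incommensurable {β γ : ℝ} (hβ : β ≠ 0) (hγ : γ ≠ 0)
    (hinc : {x : ℝ | ∃ m : ℤ, x = m * β} ∩ {x : ℝ | ∃ k : ℤ, x = k * γ} = {0}) :
    Irrational (γ / β) := by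
  rintro ⟨q, hq⟩
  have hmem : (q.den : ℝ) * γ ∈ {x : ℝ | ∃ m : ℤ, x = m * β} ∩ {x : ℝ | ∃ k : ℤ, x = k * γ} := by
    refine ⟨⟨q.num, ?_⟩, ⟨q.den, by simp⟩⟩
    rw [eq_div_iff hβ, Rat.cast_def] at hq
    field_simp at hq
    linarith
  simp [hinc, hγ] at hmem

theorem AddCircle.dense_range_iterate_add {p a : ℝ} [Fact (0 < p)] (ha : Irrational (a / p))
    (x : AddCircle p) : Dense (range fun n : ℕ => (· + (a : AddCircle p))^[n] x) := by
  simp_rw [add_right_iterate_apply]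
  exact (Homeomorph.addLeft x).surjective.denseRange.comp
    (denseRange_zsmul_iff_nsmul.1 (AddCircle.denseRange_zsmul_coe_iff.2 ha)) (by fun_prop)

theorem exists_periodic_coboundary_of_irrational {p γ : ℝ} [Fact (0 < p)]
    (hirr : Irrational (γ / p)) {g : ℝ → ℝ} (hg : Continuous g) (hper : Periodic g p) {K : ℝ}
    (hK : ∀ k, |birkhoffSum (· + γ) g k 0| ≤ K) :
    ∃ h : ℝ → ℝ, Continuous h ∧ Periodic h p ∧ ∀ x, h (x + γ) - h x = g x := by
  set T : AddCircle p → AddCircle p := (· + (γ : AddCircle p))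
  have hsc : Semiconj ((↑) : ℝ → AddCircle p) (· + γ) T := fun x => AddCircle.coe_add _ x γ
  set G : AddCircle p → ℝ := hper.lift
  obtain ⟨H, hH, hHT⟩ := gottschalk_hedlund (G := G) (continuous_add_const _)
    (AddCircle.dense_range_iterate_add hirr) (continuous_coinduced_dom.2 hg)
    (x₀ := ((0 : ℝ) : AddCircle p)) (fun n => hsc.birkhoffSum_comp G n 0 ▸ hK n)
  refine ⟨H ∘ (↑), hH.comp continuous_quotient_mk',
    fun x => congrArg H (AddCircle.coe_add_period _ x), fun x => ?_⟩
  rw [comp_apply, comp_apply, hsc.eq, hHT, add_sub_cancel_left]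
  rfl

theorem stmt_6 (β γ : ℝ) (hβ : β ≠ 0) (hγ : γ ≠ 0)
    (hinc : {x : ℝ | ∃ m : ℤ, x = m * β} ∩ {x : ℝ | ∃ k : ℤ, x = k * γ} = {0})
    (g : ℝ → ℝ) (hg : Continuous g) (hper : ∀ x, g (x + β) = g x) :
    (∃ K : ℝ, 0 < K ∧ ∀ (x : ℝ) (k : ℕ),
        |∑ j ∈ Finset.range k, g (x + (j : ℝ) * γ)| ≤ K)
    ↔
    (∃ h : ℝ → ℝ, Continuous h ∧ (∀ x, h (x + β) = h x) ∧ ∀ x, h (x + γ) - h x = g x) := by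
  constructor
  · rintro ⟨K, -, hK⟩
    have : Fact (0 < |β|) := ⟨abs_pos.2 hβ⟩
    have hirr : Irrational (γ / |β|) := by
      have := irrational_div_of_incommensurable hβ hγ hinc
      rcases abs_choice β with h | h <;> rw [h]
      · exact this
      · simpa [div_neg] using this.neg
    obtain ⟨h, hh, hhβ, hhγ⟩ := exists_periodic_coboundary_of_irrational hirr hg
      (periodic_abs_iff.2 hper) (fun k => birkhoffSum_add_right γ g k 0 ▸ hK 0 k)
    exact ⟨h, hh, periodic_abs_iff.1 hhβ, hhγ⟩
  · rintro ⟨h, hh, hhβ, hhγ⟩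
    obtain ⟨C, hC⟩ := isBounded_iff_forall_norm_le.1 (Periodic.isBounded_of_continuous hhβ hβ hh)
    have hC0 : 0 ≤ C := (norm_nonneg _).trans (hC _ ⟨0, rfl⟩)
    refine ⟨2 * C + 1, by linarith, fun x k => ?_⟩
    have hgh : g = fun y => h (y + γ) - h y := funext fun y => (hhγ y).symm
    rw [← birkhoffSum_add_right, hgh, birkhoffSum_comp_sub]
    calc _ ≤ ‖h _‖ + ‖h x‖ := abs_sub _ _
      _ ≤ C + C := add_le_add (hC _ ⟨_, rfl⟩) (hC _ ⟨_, rfl⟩)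
      _ ≤ 2 * C + 1 := by linarith
end SkewProduct
end

section
/- Let E be a real Banach space and let T₁, …, Tₙ be pairwise commuting bounded linear operators on E, each of which is mean ergodic, i.e. for every x ∈ E the Cesàro averages (1/N) ∑_{k=1}^{N} Tⱼ^k x converge in norm as N → ∞. Then ker((T₁ − I)∘⋯∘(Tₙ − I)) = ker(T₁ − I) + ⋯ + ker(Tₙ − I); that is, an element x satisfies (T₁ − I)⋯(Tₙ − I)x = 0 if and only if x = x₁ + ⋯ + xₙ with Tⱼ xⱼ = xⱼ for each j. -/
/-!
Induct on `n`. Write the product as `(T₀ - 1) S` with `S` the product of the remaining factors,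
so `S x` is fixed by `T₀`. Let `p` be the limit of the Cesàro averages `A_N x` of `T₀`. Then
`T₀ p = p`, because `T₀ A_N x = A_N (T₀ x)` has the same limit as `A_N x`. Also `S p = S x`, because
`S A_N x = A_N (S x) = S x`. So `x - p` lies in the kernel of `S`, and the induction hypothesis
splits it into fixed points of the other operators. For the converse, each `Tⱼ - 1` commutes
with the other factors, so it can be moved to the right end of the product.
-/

open Filter Function Topology

section BirkhoffAverage

variable {𝕜 α E : Type*} [RCLike 𝕜] [NormedAddCommGroup E] [NormedSpace 𝕜 E]

theorem birkhoffAverage_succ_eq (f : α → α) (g : α → E) (n : ℕ) (x : α) :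
    birkhoffAverage 𝕜 f g (n + 1) x =
      ((n : 𝕜) + 1)⁻¹ • g x + ((n : 𝕜) / (n + 1)) • birkhoffAverage 𝕜 f g n (f x) := by
  rcases eq_or_ne n 0 with rfl | hn
  · simp
  simp only [birkhoffAverage, birkhoffSum_succ', smul_add, smul_smul, Nat.cast_succ]
  congr 2
  field_simp

theorem tendsto_birkhoffAverage_apply_iff {f : α → α} {g : α → E} {x : α} {p : E} :
    Tendsto (birkhoffAverage 𝕜 f g · (f x)) atTop (𝓝 p) ↔
      Tendsto (birkhoffAverage 𝕜 f g · x) atTop (𝓝 p) := by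
  have hinv : Tendsto (fun n : ℕ ↦ ((n : 𝕜) + 1)⁻¹) atTop (𝓝 0) := by
    simpa using (tendsto_one_div_add_atTop_nhds_zero_nat (𝕜 := 𝕜))
  have hratio : Tendsto (fun n : ℕ ↦ (n : 𝕜) / (n + 1)) atTop (𝓝 1) :=
    tendsto_natCast_div_add_atTop 1
  rw [← tendsto_add_atTop_iff_nat 1 (f := (birkhoffAverage 𝕜 f g · x))]
  simp only [birkhoffAverage_succ_eq]
  constructor
  · intro h
    simpa using (hinv.smul_const (g x)).add (hratio.smul h)
  · intro h
    have hsolve : ∀ᶠ n : ℕ in atTop, ((n : 𝕜) / (n + 1))⁻¹ •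
        ((((n : 𝕜) + 1)⁻¹ • g x + ((n : 𝕜) / (n + 1)) • birkhoffAverage 𝕜 f g n (f x)) -
          ((n : 𝕜) + 1)⁻¹ • g x) = birkhoffAverage 𝕜 f g n (f x) := by
      filter_upwards [eventually_ne_atTop 0] with n hn
      have hratio_ne : (n : 𝕜) / (n + 1) ≠ 0 :=
        div_ne_zero (Nat.cast_ne_zero.mpr hn) (Nat.cast_add_one_ne_zero n)
      rw [add_sub_cancel_left, inv_smul_smul₀ hratio_ne]
    refine Tendsto.congr' hsolve ?_
    simpa using (hratio.inv₀ one_ne_zero).smul (h.sub (hinv.smul_const (g x)))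

end BirkhoffAverage

namespace ContinuousLinearMap

variable {𝕜 E : Type*} [RCLike 𝕜] [NormedAddCommGroup E] [NormedSpace 𝕜 E]

def IsMeanErgodic (T : E →L[𝕜] E) : Prop :=
  ∀ x, ∃ p, Tendsto (birkhoffAverage 𝕜 T id · x) atTop (𝓝 p)

theorem apply_birkhoffAverage_of_commute {S T : E →L[𝕜] E} (h : Commute S T) (n : ℕ) (x : E) :
    S (birkhoffAverage 𝕜 T id n x) = birkhoffAverage 𝕜 T id n (S x) := by
  have hST : Function.Commute S T := fun y ↦ congr($(h.eq) y)
  rw [map_birkhoffAverage 𝕜 𝕜 S]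
  simp only [birkhoffAverage, birkhoffSum, Function.comp_apply, id_eq, hST.iterate_right _ _]

theorem birkhoffAverage_apply_eq_sum_pow (T : E →L[𝕜] E) (n : ℕ) (x : E) :
    birkhoffAverage 𝕜 T id n (T x) = (n : 𝕜)⁻¹ • ∑ k ∈ Finset.range n, (T ^ (k + 1)) x := by
  simp only [birkhoffAverage, birkhoffSum, id_eq, pow_apply_eq_iterate, iterate_succ_apply]

theorem isMeanErgodic_of_tendsto_sum_pow {T : E →L[𝕜] E}
    (h : ∀ x, ∃ p, Tendsto (fun n : ℕ ↦ (n : 𝕜)⁻¹ • ∑ k ∈ Finset.range n, (T ^ (k + 1)) x)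
      atTop (𝓝 p)) :
    T.IsMeanErgodic := fun x ↦
  (h x).imp fun _ hp ↦ tendsto_birkhoffAverage_apply_iff.mp <| by
    simpa only [birkhoffAverage_apply_eq_sum_pow] using hp

theorem IsMeanErgodic.exists_fixed_sub_mem_ker {T S : E →L[𝕜] E} (hT : T.IsMeanErgodic)
    (hST : Commute S T) {x : E} (hx : T (S x) = S x) : ∃ p, T p = p ∧ S (x - p) = 0 := by
  obtain ⟨p, hp⟩ := hT x
  refine ⟨p, tendsto_nhds_unique ((T.continuous.tendsto p).comp hp) ?_, ?_⟩
  · simpa only [comp_def, apply_birkhoffAverage_of_commute (Commute.refl T)]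
      using tendsto_birkhoffAverage_apply_iff.mpr hp
  · have hSx : Tendsto (fun n ↦ S (birkhoffAverage 𝕜 T id n x)) atTop (𝓝 (S x)) := by
      simp only [apply_birkhoffAverage_of_commute hST]
      exact (IsFixedPt.tendsto_birkhoffAverage 𝕜 hx id)
    rw [map_sub, tendsto_nhds_unique ((S.continuous.tendsto p).comp hp) hSx, sub_self]

theorem list_prod_apply_eq_zero_of_mem {l : List (E →L[𝕜] E)} {A : E →L[𝕜] E} (hA : A ∈ l)
    (hl : ∀ B ∈ l, ∀ C ∈ l, Commute B C) {y : E} (hy : A y = 0) : l.prod y = 0 := by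
  classical
  have hcomm : Commute A (l.erase A).prod :=
    .list_prod_right _ _ fun B hB ↦ hl A hA B (List.mem_of_mem_erase hB)
  rw [← List.prod_erase_of_comm hA fun B hB C hC ↦ (hl B hB C hC).eq, hcomm.eq,
    mul_apply_eq_comp, hy, map_zero]

theorem exists_sum_fixed_of_prod_apply_eq_zero {n : ℕ} {T : Fin n → E →L[𝕜] E}
    (hcomm : ∀ i j, Commute (T i) (T j)) (herg : ∀ j, (T j).IsMeanErgodic) {x : E}
    (hx : (List.ofFn fun j ↦ T j - 1).prod x = 0) :
    ∃ y : Fin n → E, (∀ j, T j (y j) = y j) ∧ x = ∑ j, y j := by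
  induction n generalizing x with
  | zero => exact ⟨finZeroElim, finZeroElim, by simpa using hx⟩
  | succ n ih =>
    set S := (List.ofFn fun j : Fin n ↦ T j.succ - 1).prod
    have hSx : T 0 (S x) = S x := by
      rw [List.ofFn_succ, List.prod_cons, mul_apply_eq_comp, sub_apply, sub_eq_zero] at hx
      exact hx
    have hST : Commute S (T 0) := .list_prod_left _ _ fun B hB ↦ by
      obtain ⟨j, rfl⟩ := List.mem_ofFn.mp hB
      exact (hcomm j.succ 0).sub_left (.one_left _)
    obtain ⟨p, hp, hSp⟩ := (herg 0).exists_fixed_sub_mem_ker hST hSx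
    obtain ⟨y, hy, hsum⟩ := ih (fun i j ↦ hcomm i.succ j.succ) (fun j ↦ herg j.succ) hSp
    refine ⟨Fin.cons p y, Fin.cases hp hy, ?_⟩
    rw [Fin.sum_cons, ← hsum, add_sub_cancel]

end ContinuousLinearMap

open ContinuousLinearMap

theorem stmt_7_general {E : Type*} [NormedAddCommGroup E] [NormedSpace ℝ E]
    (n : ℕ) (T : Fin n → E →L[ℝ] E)
    (hcomm : ∀ i j, T i * T j = T j * T i)
    (herg : ∀ (j : Fin n) (x : E), ∃ y : E,
      Tendsto (fun N : ℕ => (N : ℝ)⁻¹ • ∑ k ∈ Finset.range N, (T j ^ (k + 1)) x)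
        atTop (nhds y))
    (x : E) :
    ((List.ofFn fun j => T j - 1).prod x = 0 ↔
      ∃ y : Fin n → E, (∀ j, T j (y j) = y j) ∧ x = ∑ j, y j) := by
  refine ⟨exists_sum_fixed_of_prod_apply_eq_zero hcomm
    (fun j ↦ isMeanErgodic_of_tendsto_sum_pow (herg j)), ?_⟩
  rintro ⟨y, hy, rfl⟩
  have hfactors : ∀ A ∈ List.ofFn (fun j ↦ T j - 1), ∀ B ∈ List.ofFn (fun j ↦ T j - 1),
      Commute A B := by
    simp only [List.mem_ofFn, forall_exists_index, forall_apply_eq_imp_iff]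
    exact fun i j ↦ (Commute.sub_left (hcomm i j) (.one_left _)).sub_right (.one_right _)
  rw [map_sum]
  refine Finset.sum_eq_zero fun j _ ↦
    list_prod_apply_eq_zero_of_mem (List.mem_ofFn.mpr ⟨j, rfl⟩) hfactors ?_
  rw [sub_apply, hy, one_apply_eq_self, sub_self]

theorem stmt_7 {E : Type*} [NormedAddCommGroup E] [NormedSpace ℝ E] [CompleteSpace E]
    (n : ℕ) (T : Fin n → E →L[ℝ] E)
    (hcomm : ∀ i j, T i * T j = T j * T i)
    (herg : ∀ (j : Fin n) (x : E), ∃ y : E,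
      Tendsto (fun N : ℕ => (N : ℝ)⁻¹ • ∑ k ∈ Finset.range N, (T j ^ (k + 1)) x)
        atTop (nhds y))
    (x : E) :
    ((List.ofFn fun j => T j - 1).prod x = 0 ↔
      ∃ y : Fin n → E, (∀ j, T j (y j) = y j) ∧ x = ∑ j, y j) :=
  stmt_7_general n T hcomm herg x
end

section
/- Let E be a reflexive real Banach space and let T₁, …, Tₙ be pairwise commuting bounded linear operators on E, each power bounded, i.e. for each j there is Cⱼ with ‖Tⱼ^k‖ ≤ Cⱼ for all k ∈ ℕ. Then ker((T₁ − I)∘⋯∘(Tₙ − I)) = ker(T₁ − I) + ⋯ + ker(Tₙ − I). -/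
/-!
For a power bounded `S` on a reflexive space, the Cesàro means
`aₙ = n⁻¹ ∑_{k<n} Sᵏ x` are bounded, so they have a weak cluster point `y`. Since
`(S - 1) aₙ = n⁻¹ (Sⁿ x - x) → 0`, the point `y` is fixed by `S`; and for every `Q` commuting
with `S` such that `Q x` is `S`-fixed, `Q aₙ = Q x`, whence `Q y = Q x`. With
`R = ∏_{j ≥ 1} (Tⱼ - 1)` and `S = T₀`, a vector killed by `(S - 1) R` therefore splits as
`y + (x - y)` with `S y = y` and `R (x - y) = 0`, and induction on `n` finishes the proof.
-/

open Filter Topology Bornology NormedSpace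

theorem eq_of_mapClusterPt_toWeakSpace_of_tendsto {𝕜 E F ι : Type*} [RCLike 𝕜]
    [AddCommGroup E] [TopologicalSpace E] [Module 𝕜 E]
    [AddCommGroup F] [TopologicalSpace F] [Module 𝕜 F] [SeparatingDual 𝕜 F]
    {l : Filter ι} {u : ι → E} {y : E}
    (hy : MapClusterPt (toWeakSpace 𝕜 E y) l (toWeakSpace 𝕜 E ∘ u))
    (L : E →L[𝕜] F) {z : F} (hL : Tendsto (L ∘ u) l (𝓝 z)) : L y = z := by
  have hLy := hy.continuousAt_comp (WeakSpace.map L).continuous.continuousAt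
  have hz := ((toWeakSpaceCLM 𝕜 F).continuous.tendsto z).comp hL
  exact (toWeakSpace 𝕜 F).injective (eq_of_nhds_neBot (hLy.clusterPt.mono hz))

theorem map_birkhoffAverage_id_of_commute {R M F : Type*} [DivisionSemiring R]
    [AddCommMonoid M] [Module R M] [FunLike F M M] [AddMonoidHomClass F M M]
    {Q : F} {f : M → M} (h : Function.Commute Q f) (n : ℕ) (x : M) :
    Q (birkhoffAverage R f id n x) = birkhoffAverage R f id n (Q x) := by
  rw [map_birkhoffAverage R R]
  simp only [birkhoffAverage, birkhoffSum, Function.comp_apply, id, h.iterate_right _ _]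

theorem norm_birkhoffAverage_le (𝕜 : Type*) {α E : Type*} [RCLike 𝕜] [NormedAddCommGroup E]
    [NormedSpace 𝕜 E] {f : α → α} {g : α → E} {x : α} {C : ℝ}
    (h : ∀ k, ‖g (f^[k] x)‖ ≤ C) (n : ℕ) : ‖birkhoffAverage 𝕜 f g n x‖ ≤ C := by
  rcases eq_or_ne n 0 with rfl | hn
  · simpa using (norm_nonneg _).trans (h 0)
  · rw [birkhoffAverage, birkhoffSum, norm_smul, norm_inv, RCLike.norm_natCast,
      inv_mul_le_iff₀ (by positivity)]
    simpa using norm_sum_le_of_le (Finset.range n) fun k _ ↦ h k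

theorem ContinuousLinearMap.isBounded_range_iterate_apply {𝕜 E : Type*}
    [NontriviallyNormedField 𝕜] [NormedAddCommGroup E] [NormedSpace 𝕜 E] {S : E →L[𝕜] E}
    {C : ℝ} (h : ∀ k, ‖S ^ k‖ ≤ C) (x : E) : IsBounded (Set.range fun k ↦ S^[k] x) :=
  isBounded_iff_forall_norm_le.2 ⟨C * ‖x‖, Set.forall_mem_range.2 fun k ↦ by
    rw [← pow_apply_eq_iterate]
    exact (S ^ k).le_of_opNorm_le (h k) x⟩

section Reflexive

variable {𝕜 E : Type*} [RCLike 𝕜] [NormedAddCommGroup E] [NormedSpace 𝕜 E]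

theorem exists_mapClusterPt_toWeakSpace_of_isBounded
    (hrefl : Function.Surjective (inclusionInDoubleDual 𝕜 E))
    {ι : Type*} {l : Filter ι} [l.NeBot] {u : ι → E} (hu : IsBounded (Set.range u)) :
    ∃ y : E, MapClusterPt (toWeakSpace 𝕜 E y) l (toWeakSpace 𝕜 E ∘ u) := by
  have hsurj : Function.Surjective (inclusionInDoubleDualWeak 𝕜 E) := fun ξ ↦
    (hrefl (WeakDual.toStrongDual ξ)).imp fun _ hy ↦ congrArg StrongDual.toWeakDual hy
  have hcpt := isCompact_closure_of_isBounded 𝕜 E (Set.range (toWeakSpace 𝕜 E ∘ u))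
    (by rwa [Set.range_comp, (toWeakSpace 𝕜 E).injective.preimage_image])
    (by simp [hsurj.range_eq])
  obtain ⟨y, -, hy⟩ := hcpt.exists_mapClusterPt (f := l) (u := toWeakSpace 𝕜 E ∘ u)
    (le_principal_iff.2 (mem_map.2 (univ_mem' fun i ↦ subset_closure ⟨i, rfl⟩)))
  exact ⟨(toWeakSpace 𝕜 E).symm y, by simpa using hy⟩

theorem exists_isFixedPt_map_eq_of_commute
    (hrefl : Function.Surjective (inclusionInDoubleDual 𝕜 E)) (S : E →L[𝕜] E) {x : E}
    (hx : IsBounded (Set.range fun k ↦ S^[k] x)) :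
    ∃ y, S y = y ∧ ∀ Q : E →L[𝕜] E, Commute Q S → S (Q x) = Q x → Q y = Q x := by
  set a : ℕ → E := fun n ↦ birkhoffAverage 𝕜 S id n x
  obtain ⟨C, hC⟩ := isBounded_iff_forall_norm_le.1 hx
  have ha : IsBounded (Set.range a) := isBounded_iff_forall_norm_le.2
    ⟨C, Set.forall_mem_range.2 fun n ↦ norm_birkhoffAverage_le 𝕜 (fun k ↦ hC _ ⟨k, rfl⟩) n⟩
  obtain ⟨y, hy⟩ := exists_mapClusterPt_toWeakSpace_of_isBounded hrefl (l := atTop) ha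
  have map_a : ∀ Q : E →L[𝕜] E, Commute Q S →
      ∀ n, Q (a n) = birkhoffAverage 𝕜 S id n (Q x) := fun Q hQ n ↦
    map_birkhoffAverage_id_of_commute (Q := Q) (f := S) (DFunLike.congr_fun hQ.eq) n x
  refine ⟨y, ?_, fun Q hQ hQx ↦ ?_⟩
  · have : Tendsto (fun n ↦ (S - 1) (a n)) atTop (𝓝 0) := by
      simpa [a, map_a S (Commute.refl S)] using
        tendsto_birkhoffAverage_apply_sub_birkhoffAverage 𝕜 (g := id) hx
    exact sub_eq_zero.1 (eq_of_mapClusterPt_toWeakSpace_of_tendsto hy (S - 1) this)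
  · exact eq_of_mapClusterPt_toWeakSpace_of_tendsto hy Q <|
      (Function.IsFixedPt.tendsto_birkhoffAverage 𝕜 hQx id).congr fun n ↦ (map_a Q hQ n).symm

theorem sub_one_mul_apply_eq_zero_iff
    (hrefl : Function.Surjective (inclusionInDoubleDual 𝕜 E)) {S R : E →L[𝕜] E}
    (hSR : Commute S R) {x : E} (hx : IsBounded (Set.range fun k ↦ S^[k] x)) :
    ((S - 1) * R) x = 0 ↔ ∃ y, S y = y ∧ R (x - y) = 0 := by
  constructor
  · intro h
    obtain ⟨y, hy, hfix⟩ := exists_isFixedPt_map_eq_of_commute hrefl S hx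
    exact ⟨y, hy, by rw [map_sub, hfix R hSR.symm (sub_eq_zero.1 h), sub_self]⟩
  · rintro ⟨y, hy, hxy⟩
    have hRS : (S - 1) * R = R * (S - 1) := (hSR.sub_left (Commute.one_left R)).eq
    have h₁ : ((S - 1) * R) (x - y) = 0 := by simp [hxy]
    have h₂ : ((S - 1) * R) y = 0 := by simp [hRS, hy]
    rw [← sub_add_cancel x y, map_add, h₁, h₂, add_zero]

end Reflexive

theorem stmt_8_general {E : Type*} [NormedAddCommGroup E] [NormedSpace ℝ E]
    (hrefl : Function.Surjective (NormedSpace.inclusionInDoubleDual ℝ E))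
    (n : ℕ) (T : Fin n → E →L[ℝ] E)
    (hcomm : ∀ i j, T i * T j = T j * T i)
    (hpb : ∀ j : Fin n, ∃ C : ℝ, ∀ k : ℕ, ‖T j ^ k‖ ≤ C)
    (x : E) :
    ((List.ofFn fun j => T j - 1).prod x = 0 ↔
      ∃ y : Fin n → E, (∀ j, T j (y j) = y j) ∧ x = ∑ j, y j) := by
  induction n generalizing x with
  | zero => simp [eq_comm]
  | succ n ih =>
    obtain ⟨C, hC⟩ := hpb 0
    have hcomm₀ : Commute (T 0) (List.ofFn fun j : Fin n ↦ T j.succ - 1).prod :=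
      Commute.list_prod_right _ _ fun _ hb ↦ by
        obtain ⟨j, rfl⟩ := List.mem_ofFn.1 hb
        exact Commute.sub_right (hcomm 0 j.succ) (Commute.one_right _)
    rw [List.ofFn_succ, List.prod_cons, sub_one_mul_apply_eq_zero_iff hrefl hcomm₀
      ((T 0).isBounded_range_iterate_apply hC x)]
    simp only [ih (fun j ↦ T j.succ) (fun i j ↦ hcomm _ _) (fun j ↦ hpb _),
      Fin.exists_fin_succ_pi, Fin.forall_fin_succ, Fin.cons_zero, Fin.cons_succ,
      Fin.sum_univ_succ, sub_eq_iff_eq_add', and_assoc, exists_and_left]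

theorem stmt_8 {E : Type*} [NormedAddCommGroup E] [NormedSpace ℝ E] [CompleteSpace E]
    (hrefl : Function.Surjective (NormedSpace.inclusionInDoubleDual ℝ E))
    (n : ℕ) (T : Fin n → E →L[ℝ] E)
    (hcomm : ∀ i j, T i * T j = T j * T i)
    (hpb : ∀ j : Fin n, ∃ C : ℝ, ∀ k : ℕ, ‖T j ^ k‖ ≤ C)
    (x : E) :
    ((List.ofFn fun j => T j - 1).prod x = 0 ↔
      ∃ y : Fin n → E, (∀ j, T j (y j) = y j) ∧ x = ∑ j, y j) :=
  stmt_8_general hrefl n T hcomm hpb x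
end

section
/- Let (X, Σ, μ) be a measure space, 1 < p < ∞, and let T₁, …, Tₙ : X → X be pairwise commuting measurable maps such that μ(Tⱼ⁻¹(A)) ≤ μ(A) for every A ∈ Σ and each j. Let f : X → ℝ be in L^p(μ) and suppose Δ_{T₁}⋯Δ_{Tₙ} f = 0 μ-almost everywhere. Then there exist functions f₁, …, fₙ ∈ L^p(μ) with fⱼ ∘ Tⱼ = fⱼ μ-almost everywhere for each j, and f = f₁ + ⋯ + fₙ μ-almost everywhere. -/
/-!
If `μ.map T ≤ μ`, composition with `T` is a contraction `K_T` of `Lᵖ(μ)`, and for `1 < p < ∞`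
its Cesàro averages converge: in `L²` this is von Neumann's mean ergodic theorem, on
`L¹ ∩ L^∞` it transfers to `Lᵖ` by interpolating between `L²` and `L¹` or `L^∞`, and it extends
to all of `Lᵖ` because the averages are `1`-Lipschitz.

The hypothesis says `(K₁ - 1) ⋯ (Kₙ - 1) f = 0`. Put `D = (K₂ - 1) ⋯ (Kₙ - 1)` and let `y` be
the limit of the `K₁`-averages of `f`; then `K₁ y = y`. Since `D f` is `K₁`-invariant and `D`
commutes with `K₁`, `D f` equals the `K₁`-averages of `D f`, i.e. `D` of the averages of `f`,
so `D f = D y`. Thus `f - y` satisfies the hypothesis for `T₂, …, Tₙ`, and induction on `n`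
splits it into invariant pieces.
-/

open MeasureTheory

/-- The `T`-difference operator `Δ_T f = f ∘ T - f`. -/
def deltaK {X : Type*} (T : X → X) (f : X → ℝ) : X → ℝ := fun x => f (T x) - f x

open Filter Finset Function
open scoped ENNReal NNReal Topology

theorem cauchySeq_iff_tendsto_edist_atTop_zero {α : Type*} [PseudoMetricSpace α] {u : ℕ → α} :
    CauchySeq u ↔ Tendsto (fun mn : ℕ × ℕ => edist (u mn.1) (u mn.2)) atTop (𝓝 0) := by
  rw [cauchySeq_iff_tendsto_dist_atTop_0, ← ENNReal.toReal_zero,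
    ← ENNReal.tendsto_toReal_iff (fun _ => edist_ne_top _ _) ENNReal.zero_ne_top]
  simp only [dist_edist]

theorem isClosed_setOf_cauchySeq_of_lipschitzWith {α β : Type*} [PseudoMetricSpace α]
    [PseudoMetricSpace β] {A : ℕ → α → β} {K : ℝ≥0} (hA : ∀ n, LipschitzWith K (A n)) :
    IsClosed {x | CauchySeq (A · x)} := by
  simp only [cauchySeq_iff_tendsto_dist_atTop_0]
  exact (LipschitzWith.uniformEquicontinuous _ _ fun mn : ℕ × ℕ =>
    LipschitzWith.dist.comp ((hA mn.1).prodMk (hA mn.2))).equicontinuous.isClosed_setOfPred_tendsto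
      continuous_const

section Contraction

variable {E : Type*} [NormedAddCommGroup E] [NormedSpace ℝ E]

theorem LipschitzWith.birkhoffAverage_id {f : E → E} (hf : LipschitzWith 1 f) (N : ℕ) :
    LipschitzWith 1 (birkhoffAverage ℝ f id N) := by
  refine LipschitzWith.of_dist_le_mul fun x y => ?_
  refine (dist_birkhoffAverage_birkhoffAverage_le ℝ f id N x y).trans ?_
  calc (∑ k ∈ range N, dist (f^[k] x) (f^[k] y)) / N ≤ (∑ _k ∈ range N, dist x y) / N := by
        gcongr with k
        simpa using (hf.iterate k).dist_le_mul x y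
    _ ≤ ((1 : ℝ≥0) : ℝ) * dist x y := by
        rcases eq_or_ne N 0 with rfl | hN
        · simp
        · simp [hN]

namespace ContinuousLinearMap

theorem birkhoffAverage_eq (S : E →L[ℝ] E) (N : ℕ) :
    birkhoffAverage ℝ S id N = ⇑((N : ℝ)⁻¹ • ∑ k ∈ range N, S ^ k) := by
  ext x
  simp [birkhoffAverage, birkhoffSum]

theorem birkhoffAverage_apply_of_commute {S D : E →L[ℝ] E} (h : Commute S D) (N : ℕ) (x : E) :
    birkhoffAverage ℝ S id N (D x) = D (birkhoffAverage ℝ S id N x) := by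
  rw [birkhoffAverage_eq, ← mul_apply_eq_comp, ← mul_apply_eq_comp,
    ((Commute.sum_left _ _ _ fun k _ => h.pow_left k).smul_left _).eq]

theorem apply_eq_of_tendsto_birkhoffAverage {S : E →L[ℝ] E} (hS : LipschitzWith 1 S) {x y : E}
    (h : Tendsto (birkhoffAverage ℝ S id · x) atTop (𝓝 y)) : S y = y := by
  have hbdd : Bornology.IsBounded (Set.range (id <| S^[·] x)) := by
    refine isBounded_iff_forall_norm_le.2 ⟨‖x‖, Set.forall_mem_range.2 fun k => ?_⟩
    simpa [← coe_pow] using (hS.iterate k).dist_le_mul x 0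
  have hSy : Tendsto (fun N => birkhoffAverage ℝ S id N (S x) - birkhoffAverage ℝ S id N x)
      atTop (𝓝 (S y - y)) := by
    refine ((S.continuous.tendsto y).comp h).sub h |>.congr fun N => ?_
    rw [Function.comp_apply, birkhoffAverage_apply_of_commute (Commute.refl S)]
  exact sub_eq_zero.1 (tendsto_nhds_unique hSy
    (tendsto_birkhoffAverage_apply_sub_birkhoffAverage ℝ hbdd))

theorem exists_eq_sum_of_list_prod_sub_one_apply_eq_zero {n : ℕ} (S : Fin n → E →L[ℝ] E)
    (hS : ∀ j, LipschitzWith 1 (S j)) (hcomm : ∀ i j, Commute (S i) (S j))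
    (hconv : ∀ j x, ∃ y, Tendsto (birkhoffAverage ℝ (S j) id · x) atTop (𝓝 y))
    (x : E) (hx : (List.ofFn fun j => S j - 1).prod x = 0) :
    ∃ g : Fin n → E, (∀ j, S j (g j) = g j) ∧ x = ∑ j, g j := by
  induction n generalizing x with
  | zero => exact ⟨finZeroElim, finZeroElim, by simpa using hx⟩
  | succ n ih =>
    set D := (List.ofFn fun j : Fin n => S j.succ - 1).prod
    have hD : Commute (S 0) D := Commute.list_prod_right _ _ fun _ hmem => by
      obtain ⟨j, rfl⟩ := List.mem_ofFn.1 hmem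
      exact (hcomm 0 j.succ).sub_right (Commute.one_right _)
    have hDx : S 0 (D x) = D x := by
      rw [List.ofFn_succ, List.prod_cons, mul_apply_eq_comp, sub_apply, one_apply_eq_self] at hx
      exact sub_eq_zero.1 hx
    obtain ⟨y, hy⟩ := hconv 0 x
    have hDxy : D x = D y := by
      refine tendsto_nhds_unique ?_ ((D.continuous.tendsto y).comp hy)
      refine tendsto_const_nhds.congr' ((eventually_ne_atTop 0).mono fun N hN => ?_)
      rw [Function.comp_apply, ← birkhoffAverage_apply_of_commute hD,
        IsFixedPt.birkhoffAverage_eq ℝ hDx id (Nat.cast_ne_zero.2 hN), id]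
    obtain ⟨g, hg, hsum⟩ := ih (fun j => S j.succ) (fun j => hS _) (fun i j => hcomm _ _)
      (fun j => hconv _) (x - y) (by rw [map_sub, hDxy, sub_self])
    refine ⟨Fin.cons y g, Fin.cases (apply_eq_of_tendsto_birkhoffAverage (hS 0) hy) hg, ?_⟩
    rw [Fin.sum_cons, ← hsum, add_sub_cancel]

end ContinuousLinearMap

end Contraction

section Interpolation

open ENNReal

variable {α F : Type*} [MeasurableSpace α] {μ : Measure α} [NormedAddCommGroup F]

theorem eLpNorm_le_eLpNorm_rpow_mul_eLpNorm_rpow {f : α → F} {p p₀ p₁ : ℝ≥0∞} {θ : ℝ}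
    (hθ₀ : 0 < θ) (hθ₁ : θ < 1)
    [HolderTriple (p₀ / ENNReal.ofReal θ) (p₁ / ENNReal.ofReal (1 - θ)) p]
    (hf : AEStronglyMeasurable f μ) :
    eLpNorm f p μ ≤ eLpNorm f p₀ μ ^ θ * eLpNorm f p₁ μ ^ (1 - θ) := by
  have hθ₁' : 0 < 1 - θ := sub_pos.2 hθ₁
  calc eLpNorm f p μ = eLpNorm (fun x => ‖f x‖ ^ θ * ‖f x‖ ^ (1 - θ)) p μ := by
        rw [← eLpNorm_norm f]
        congr with x
        rw [← Real.rpow_add' (norm_nonneg _) (by norm_num), add_sub_cancel, Real.rpow_one]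
    _ ≤ 1 * eLpNorm (‖f ·‖ ^ θ) (p₀ / ENNReal.ofReal θ) μ *
          eLpNorm (‖f ·‖ ^ (1 - θ)) (p₁ / ENNReal.ofReal (1 - θ)) μ :=
        eLpNorm_le_eLpNorm_mul_eLpNorm_of_nnnorm
          (hf.norm.aemeasurable.pow_const _).aestronglyMeasurable
          (hf.norm.aemeasurable.pow_const _).aestronglyMeasurable (· * ·) 1
          (ae_of_all _ fun x => by rw [one_mul]; exact nnnorm_mul_le _ _)
    _ = eLpNorm f p₀ μ ^ θ * eLpNorm f p₁ μ ^ (1 - θ) := by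
        rw [eLpNorm_norm_rpow _ hθ₀, eLpNorm_norm_rpow _ hθ₁',
          ENNReal.div_mul_cancel (by simpa using hθ₀) ofReal_ne_top,
          ENNReal.div_mul_cancel (by simpa using hθ₁') ofReal_ne_top, one_mul]

theorem tendsto_eLpNorm_nhds_zero_of_tendsto_eLpNorm_two {ι : Type*} {l : Filter ι} {h : ι → α → F}
    {p C : ℝ≥0∞} (hp₁ : 1 < p) (hp : p ≠ ∞) (hC : C ≠ ∞) (hm : ∀ i, AEStronglyMeasurable (h i) μ)
    (h₁ : ∀ i, eLpNorm (h i) 1 μ ≤ C) (h_top : ∀ i, eLpNorm (h i) ∞ μ ≤ C)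
    (h₂ : Tendsto (fun i => eLpNorm (h i) 2 μ) l (𝓝 0)) :
    Tendsto (fun i => eLpNorm (h i) p μ) l (𝓝 0) := by
  suffices ∃ θ : ℝ, 0 ≤ θ ∧ θ < 1 ∧ ∀ i, eLpNorm (h i) p μ ≤ C ^ θ * eLpNorm (h i) 2 μ ^ (1 - θ) by
    obtain ⟨θ, hθ₀, hθ₁, hle⟩ := this
    have hlim : Tendsto (fun i => C ^ θ * eLpNorm (h i) 2 μ ^ (1 - θ)) l (𝓝 0) := by
      have := ENNReal.Tendsto.const_mul
        ((ENNReal.continuous_rpow_const (y := 1 - θ)).tendsto 0 |>.comp h₂)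
        (Or.inr (rpow_ne_top_of_nonneg hθ₀ hC))
      rwa [ENNReal.zero_rpow_of_pos (sub_pos.2 hθ₁), mul_zero] at this
    exact tendsto_of_tendsto_of_tendsto_of_le_of_le tendsto_const_nhds hlim (fun _ => zero_le) hle
  have hp₀ : 1 < p.toReal := by simpa using ENNReal.toReal_strict_mono hp hp₁
  rcases lt_trichotomy p 2 with hlt | rfl | hgt
  · have hp₂ : p.toReal < 2 := by simpa using ENNReal.toReal_strict_mono ofNat_ne_top hlt
    set θ := 2 / p.toReal - 1
    have hθ₀ : 0 < θ := by rw [sub_pos, lt_div_iff₀ (by linarith)]; linarith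
    have hθ₁ : θ < 1 := by rw [sub_lt_iff_lt_add, div_lt_iff₀ (by linarith)]; linarith
    have : HolderTriple (1 / ENNReal.ofReal θ) (2 / ENNReal.ofReal (1 - θ)) p := by
      refine HolderTriple.of_toReal ⟨?_, ?_, ?_⟩
      · rw [toReal_div, toReal_div, toReal_ofReal hθ₀.le, toReal_ofReal (sub_pos.2 hθ₁).le,
          toReal_one, toReal_ofNat]
        simp only [θ]
        field_simp
        ring
      · rw [toReal_div, toReal_ofReal hθ₀.le, toReal_one]
        exact one_div_pos.2 hθ₀
      · rw [toReal_div, toReal_ofReal (sub_pos.2 hθ₁).le]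
        exact div_pos two_pos (sub_pos.2 hθ₁)
    refine ⟨θ, hθ₀.le, hθ₁, fun i => ?_⟩
    calc eLpNorm (h i) p μ ≤ eLpNorm (h i) 1 μ ^ θ * eLpNorm (h i) 2 μ ^ (1 - θ) :=
          eLpNorm_le_eLpNorm_rpow_mul_eLpNorm_rpow hθ₀ hθ₁ (hm i)
      _ ≤ C ^ θ * eLpNorm (h i) 2 μ ^ (1 - θ) := by gcongr; exact h₁ i
  · exact ⟨0, le_rfl, one_pos, fun i => by simp⟩
  · have hp₂ : 2 < p.toReal := by simpa using ENNReal.toReal_strict_mono hp hgt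
    set θ := 1 - 2 / p.toReal
    have hθ₀ : 0 < θ := by rw [sub_pos, div_lt_iff₀ (by linarith)]; linarith
    have hθ₁ : θ < 1 := by simp only [θ]; linarith [div_pos two_pos (by linarith : 0 < p.toReal)]
    have : HolderTriple (∞ / ENNReal.ofReal θ) (2 / ENNReal.ofReal (1 - θ)) p := by
      rw [top_div_of_ne_top ofReal_ne_top, _root_.sub_sub_cancel,
        ENNReal.ofReal_div_of_pos (by linarith), ofReal_ofNat, ofReal_toReal hp,
        ENNReal.div_div_cancel two_ne_zero ofNat_ne_top]
      infer_instance
    refine ⟨θ, hθ₀.le, hθ₁, fun i => ?_⟩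
    calc eLpNorm (h i) p μ ≤ eLpNorm (h i) ∞ μ ^ θ * eLpNorm (h i) 2 μ ^ (1 - θ) :=
          eLpNorm_le_eLpNorm_rpow_mul_eLpNorm_rpow hθ₀ hθ₁ (hm i)
      _ ≤ C ^ θ * eLpNorm (h i) 2 μ ^ (1 - θ) := by gcongr; exact h_top i

end Interpolation

section Koopman

variable {X E : Type*} [MeasurableSpace X] {μ : Measure X} {T : X → X} [NormedAddCommGroup E]

theorem quasiMeasurePreserving_of_map_le (hT : Measurable T) (hμ : μ.map T ≤ μ) :
    Measure.QuasiMeasurePreserving T μ μ :=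
  ⟨hT, Measure.absolutelyContinuous_of_le hμ⟩

theorem eLpNorm_comp_le_of_map_le (hT : Measurable T) (hμ : μ.map T ≤ μ) {g : X → E}
    {q : ℝ≥0∞} (hg : AEStronglyMeasurable g μ) : eLpNorm (g ∘ T) q μ ≤ eLpNorm g q μ := by
  rw [← eLpNorm_map_measure (hg.mono_measure hμ) hT.aemeasurable]
  exact eLpNorm_mono_measure g hμ

theorem MeasureTheory.MemLp.comp_of_map_le (hT : Measurable T) (hμ : μ.map T ≤ μ) {g : X → E}
    {q : ℝ≥0∞} (hg : MemLp g q μ) : MemLp (g ∘ T) q μ :=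
  ⟨hg.1.comp_quasiMeasurePreserving (quasiMeasurePreserving_of_map_le hT hμ),
    (eLpNorm_comp_le_of_map_le hT hμ hg.1).trans_lt hg.2⟩

variable [NormedSpace ℝ E]

theorem aestronglyMeasurable_birkhoffAverage (hT : Measurable T) (hμ : μ.map T ≤ μ) {g : X → E}
    (hg : AEStronglyMeasurable g μ) (N : ℕ) : AEStronglyMeasurable (birkhoffAverage ℝ T g N) μ :=
  ((range N).aestronglyMeasurable_fun_sum fun k _ => hg.comp_quasiMeasurePreserving
    ((quasiMeasurePreserving_of_map_le hT hμ).iterate k)).const_smul _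

variable (q : ℝ≥0∞) [Fact (1 ≤ q)]

noncomputable def koopman (hT : Measurable T) (hμ : μ.map T ≤ μ) : Lp E q μ →L[ℝ] Lp E q μ :=
  LinearMap.mkContinuous
    { toFun := fun F => ((Lp.memLp F).comp_of_map_le hT hμ).toLp (F ∘ T)
      map_add' := fun F G => by
        rw [← MemLp.toLp_add]
        exact MemLp.toLp_congr _ _
          ((quasiMeasurePreserving_of_map_le hT hμ).ae_eq_comp (Lp.coeFn_add F G))
      map_smul' := fun c F => by
        rw [RingHom.id_apply, ← MemLp.toLp_const_smul]
        exact MemLp.toLp_congr _ _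
          ((quasiMeasurePreserving_of_map_le hT hμ).ae_eq_comp (Lp.coeFn_smul c F)) }
    1 fun F => by
      rw [one_mul, LinearMap.coe_mk, AddHom.coe_mk, Lp.norm_toLp, Lp.norm_def]
      exact ENNReal.toReal_mono (Lp.eLpNorm_ne_top F)
        (eLpNorm_comp_le_of_map_le hT hμ (Lp.aestronglyMeasurable F))

variable {q}
variable (hT : Measurable T) (hμ : μ.map T ≤ μ)

theorem coeFn_koopman (F : Lp E q μ) : koopman q hT hμ F =ᵐ[μ] F ∘ T :=
  ((Lp.memLp F).comp_of_map_le hT hμ).coeFn_toLp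

theorem norm_koopman_le : ‖koopman q hT hμ (E := E)‖ ≤ 1 :=
  LinearMap.mkContinuous_norm_le _ zero_le_one _

theorem lipschitzWith_koopman : LipschitzWith 1 (koopman q hT hμ (E := E)) :=
  ContinuousLinearMap.lipschitzWith_of_opNorm_le <| by
    rw [NNReal.coe_one]
    exact norm_koopman_le hT hμ

theorem koopman_commute {T' : X → X} (hT' : Measurable T') (hμ' : μ.map T' ≤ μ)
    (hcomm : T ∘ T' = T' ∘ T) : Commute (koopman q hT hμ) (koopman q hT' hμ' (E := E)) := by
  ext1 F
  refine Lp.ext ?_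
  rw [mul_apply_eq_comp, mul_apply_eq_comp]
  have h := (coeFn_koopman hT hμ _).trans
    ((quasiMeasurePreserving_of_map_le hT hμ).ae_eq_comp (coeFn_koopman hT' hμ' F))
  have h' := (coeFn_koopman hT' hμ' _).trans
    ((quasiMeasurePreserving_of_map_le hT' hμ').ae_eq_comp (coeFn_koopman hT hμ F))
  rw [comp_assoc] at h h'
  rw [hcomm] at h'
  exact h.trans h'.symm

theorem coeFn_iterate_koopman (F : Lp E q μ) (k : ℕ) :
    (koopman q hT hμ)^[k] F =ᵐ[μ] F ∘ T^[k] := by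
  induction k with
  | zero => rfl
  | succ k ih =>
    rw [iterate_succ_apply', iterate_succ, ← comp_assoc]
    exact (coeFn_koopman hT hμ _).trans
      ((quasiMeasurePreserving_of_map_le hT hμ).ae_eq_comp ih)

theorem coeFn_birkhoffAverage_koopman {F : Lp E q μ} {g : X → E} (hF : F =ᵐ[μ] g) (N : ℕ) :
    ⇑(birkhoffAverage ℝ (koopman q hT hμ) id N F) =ᵐ[μ] birkhoffAverage ℝ T g N := by
  refine EventuallyEq.trans ?_
    ((quasiMeasurePreserving_of_map_le hT hμ).birkhoffAverage_ae_eq_of_ae_eq ℝ hF N)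
  filter_upwards [Lp.coeFn_smul (N : ℝ)⁻¹ (∑ k ∈ range N, (koopman q hT hμ)^[k] F),
    Lp.coeFn_finsetSum (range N) fun k => (koopman q hT hμ)^[k] F,
    ae_all_iff.2 (coeFn_iterate_koopman hT hμ F)] with x hsmul hsum hiter
  simp only [birkhoffAverage, birkhoffSum, id]
  rw [hsmul, Pi.smul_apply, hsum, Finset.sum_apply]
  simp only [hiter, comp_apply]

end Koopman

section MeanErgodic

variable {X E : Type*} [MeasurableSpace X] {μ : Measure X} {T : X → X} [NormedAddCommGroup E]
  (hT : Measurable T) (hμ : μ.map T ≤ μ)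
include hT hμ

section NormedSpace

variable [NormedSpace ℝ E]

theorem edist_birkhoffAverage_koopman {q : ℝ≥0∞} [Fact (1 ≤ q)] {g : X → E} {G : Lp E q μ}
    (hG : G =ᵐ[μ] g) (m n : ℕ) :
    edist (birkhoffAverage ℝ (koopman q hT hμ) id m G) (birkhoffAverage ℝ (koopman q hT hμ) id n G)
      = eLpNorm (birkhoffAverage ℝ T g m - birkhoffAverage ℝ T g n) q μ := by
  rw [Lp.edist_def]
  exact eLpNorm_congr_ae
    ((coeFn_birkhoffAverage_koopman hT hμ hG m).sub (coeFn_birkhoffAverage_koopman hT hμ hG n))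

theorem eLpNorm_birkhoffAverage_le {q : ℝ≥0∞} (hq : 1 ≤ q) {g : X → E} (hg : MemLp g q μ)
    (N : ℕ) : eLpNorm (birkhoffAverage ℝ T g N) q μ ≤ eLpNorm g q μ := by
  have : Fact (1 ≤ q) := ⟨hq⟩
  have hA := (lipschitzWith_koopman (q := q) (E := E) hT hμ).birkhoffAverage_id N
  have h0 : birkhoffAverage ℝ (koopman q hT hμ) id N (0 : Lp E q μ) = 0 := by
    rw [ContinuousLinearMap.birkhoffAverage_eq, map_zero]
  calc eLpNorm (birkhoffAverage ℝ T g N) q μ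
      = edist (birkhoffAverage ℝ (koopman q hT hμ) id N (hg.toLp g)) 0 := by
        rw [edist_zero_right, Lp.enorm_def]
        exact eLpNorm_congr_ae (coeFn_birkhoffAverage_koopman hT hμ hg.coeFn_toLp N).symm
    _ ≤ edist (hg.toLp g) 0 := by simpa [h0] using hA.edist_le_mul (hg.toLp g) 0
    _ = eLpNorm g q μ := by rw [edist_zero_right, Lp.enorm_def, eLpNorm_congr_ae hg.coeFn_toLp]

theorem eLpNorm_birkhoffAverage_sub_le {q : ℝ≥0∞} (hq : 1 ≤ q) {g : X → E} (hg : MemLp g q μ)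
    (m n : ℕ) :
    eLpNorm (birkhoffAverage ℝ T g m - birkhoffAverage ℝ T g n) q μ ≤ 2 * eLpNorm g q μ := by
  rw [two_mul]
  exact (eLpNorm_sub_le (aestronglyMeasurable_birkhoffAverage hT hμ hg.1 m)
    (aestronglyMeasurable_birkhoffAverage hT hμ hg.1 n) hq).trans
    (add_le_add (eLpNorm_birkhoffAverage_le hT hμ hq hg m)
      (eLpNorm_birkhoffAverage_le hT hμ hq hg n))

end NormedSpace

variable [InnerProductSpace ℝ E] [CompleteSpace E]

theorem tendsto_eLpNorm_two_birkhoffAverage_sub {g : X → E} (hg : MemLp g 2 μ) :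
    Tendsto (fun mn : ℕ × ℕ =>
      eLpNorm (birkhoffAverage ℝ T g mn.1 - birkhoffAverage ℝ T g mn.2) 2 μ) atTop (𝓝 0) := by
  have hconv := ContinuousLinearMap.tendsto_birkhoffAverage_orthogonalProjection (𝕜 := ℝ)
    (koopman 2 hT hμ (E := E)) (norm_koopman_le hT hμ) (hg.toLp g)
  simpa only [cauchySeq_iff_tendsto_edist_atTop_zero,
    edist_birkhoffAverage_koopman hT hμ hg.coeFn_toLp] using hconv.cauchySeq

theorem cauchySeq_birkhoffAverage_koopman_of_ae_eq {p : ℝ≥0∞} [Fact (1 ≤ p)] (hp₁ : 1 < p)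
    (hp : p ≠ ∞) {g : X → E} (hg₁ : MemLp g 1 μ) (hg₂ : MemLp g 2 μ) (hg_top : MemLp g ∞ μ)
    {G : Lp E p μ} (hG : G =ᵐ[μ] g) :
    CauchySeq (birkhoffAverage ℝ (koopman p hT hμ) id · G) := by
  simp only [cauchySeq_iff_tendsto_edist_atTop_zero, edist_birkhoffAverage_koopman hT hμ hG]
  refine tendsto_eLpNorm_nhds_zero_of_tendsto_eLpNorm_two
    (C := 2 * (eLpNorm g 1 μ + eLpNorm g ∞ μ)) hp₁ hp
    (ENNReal.mul_ne_top ENNReal.ofNat_ne_top (ENNReal.add_ne_top.2 ⟨hg₁.2.ne, hg_top.2.ne⟩))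
    (fun _ => (aestronglyMeasurable_birkhoffAverage hT hμ hg₁.1 _).sub
      (aestronglyMeasurable_birkhoffAverage hT hμ hg₁.1 _))
    (fun _ => ?_) (fun _ => ?_) (tendsto_eLpNorm_two_birkhoffAverage_sub hT hμ hg₂)
  · exact (eLpNorm_birkhoffAverage_sub_le hT hμ le_rfl hg₁ _ _).trans (by gcongr; exact le_self_add)
  · exact (eLpNorm_birkhoffAverage_sub_le hT hμ le_top hg_top _ _).trans
      (by gcongr; exact le_add_self)

theorem exists_tendsto_birkhoffAverage_koopman {p : ℝ≥0∞} [Fact (1 ≤ p)] (hp₁ : 1 < p)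
    (hp : p ≠ ∞) (F : Lp E p μ) :
    ∃ G, Tendsto (birkhoffAverage ℝ (koopman p hT hμ) id · F) atTop (𝓝 G) := by
  refine cauchySeq_tendsto_of_complete ?_
  induction F using Lp.induction hp with
  | indicatorConst c hs hμs =>
    rw [Lp.simpleFunc.coe_indicatorConst]
    exact cauchySeq_birkhoffAverage_koopman_of_ae_eq hT hμ hp₁ hp
      (memLp_indicator_const 1 hs c (Or.inr hμs.ne)) (memLp_indicator_const 2 hs c (Or.inr hμs.ne))
      (memLp_indicator_const ∞ hs c (Or.inr hμs.ne)) indicatorConstLp_coeFn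
  | add _ _ _ hf hg =>
    convert hf.add hg using 1
    ext1 N
    simp only [Pi.add_apply, ContinuousLinearMap.birkhoffAverage_eq, map_add]
  | isClosed =>
    exact isClosed_setOf_cauchySeq_of_lipschitzWith
      ((lipschitzWith_koopman hT hμ).birkhoffAverage_id)

end MeanErgodic

theorem coeFn_list_prod_koopman_sub_one {X : Type*} [MeasurableSpace X] {μ : Measure X}
    {p : ℝ≥0∞} [Fact (1 ≤ p)] {n : ℕ} (T : Fin n → X → X) (hT : ∀ j, Measurable (T j))
    (hμ : ∀ j, μ.map (T j) ≤ μ) {F : Lp ℝ p μ} {f : X → ℝ} (hF : F =ᵐ[μ] f) :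
    ⇑((List.ofFn fun j => koopman p (hT j) (hμ j) - 1).prod F)
      =ᵐ[μ] (List.ofFn T).foldr deltaK f := by
  induction n with
  | zero => simpa using hF
  | succ n ih =>
    rw [List.ofFn_succ, List.prod_cons, List.ofFn_succ, List.foldr_cons, mul_apply_eq_comp,
      sub_apply, one_apply_eq_self]
    have ih' := ih (fun j => T j.succ) (fun j => hT _) (fun j => hμ _)
    set P := (List.ofFn fun j : Fin n => koopman p (hT j.succ) (hμ j.succ) - 1).prod F
    filter_upwards [Lp.coeFn_sub (koopman p (hT 0) (hμ 0) P) P, coeFn_koopman (hT 0) (hμ 0) P,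
      (quasiMeasurePreserving_of_map_le (hT 0) (hμ 0)).ae_eq_comp ih', ih'] with x hsub hK hcomp hP
    rw [hsub, Pi.sub_apply, hK, hcomp, hP]
    rfl

theorem stmt_12 {X : Type*} [MeasurableSpace X] (μ : Measure X)
    (p : ENNReal) (hp1 : 1 < p) (hp2 : p < ⊤)
    (n : ℕ) (T : Fin n → X → X)
    (hmeas : ∀ j, Measurable (T j))
    (hcomm : ∀ i j, T i ∘ T j = T j ∘ T i)
    (hcontr : ∀ (j : Fin n) (A : Set X), MeasurableSet A → μ (T j ⁻¹' A) ≤ μ A)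
    (f : X → ℝ) (hf : MemLp f p μ)
    (hdiff : (List.ofFn T).foldr deltaK f =ᵐ[μ] 0) :
    ∃ g : Fin n → X → ℝ, (∀ j, MemLp (g j) p μ) ∧
      (∀ j, g j ∘ T j =ᵐ[μ] g j) ∧ f =ᵐ[μ] fun x => ∑ j, g j x := by
  have : Fact (1 ≤ p) := ⟨hp1.le⟩
  have hμ (j : Fin n) : μ.map (T j) ≤ μ := Measure.le_iff.2 fun A hA =>
    (Measure.map_apply (hmeas j) hA).trans_le (hcontr j A hA)
  set K := fun j => koopman p (hmeas j) (hμ j) (E := ℝ)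
  have hK : (List.ofFn fun j => K j - 1).prod (hf.toLp f) = 0 := Lp.eq_zero_iff_ae_eq_zero.2
    ((coeFn_list_prod_koopman_sub_one T hmeas hμ hf.coeFn_toLp).trans hdiff)
  obtain ⟨G, hG_fix, hG_sum⟩ := ContinuousLinearMap.exists_eq_sum_of_list_prod_sub_one_apply_eq_zero
    K (fun j => lipschitzWith_koopman _ _) (fun i j => koopman_commute _ _ _ _ (hcomm i j))
    (fun j => exists_tendsto_birkhoffAverage_koopman _ _ hp1 hp2.ne) _ hK
  refine ⟨fun j => G j, fun j => Lp.memLp (G j), fun j => ?_, ?_⟩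
  · exact (hG_fix j ▸ coeFn_koopman (hmeas j) (hμ j) (G j)).symm
  · exact hf.coeFn_toLp.symm.trans (hG_sum ▸ Lp.coeFn_fun_finsetSum _ _)
end

section
/- Let X be a nonempty set, let S, T : X → X be commuting maps (S ∘ T = T ∘ S), and let f : X → ℝ. Then the following are equivalent: (i) there exist g, h : X → ℝ with f = g + h, g ∘ S = g and h ∘ T = h; (ii) Δ_S Δ_T f = 0, and whenever T^k S^n x = T^{k'} S^{n'} x for some x ∈ X and k, n, k', n' ∈ ℕ, then f(T^k x) = f(T^{k'} x); (iii) Δ_S Δ_T f = 0, and whenever T^k S^n x = T^{k'} S^{n'} x for some x ∈ X and k, n, k', n' ∈ ℕ, then f(S^n x) = f(S^{n'} x). -/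
/-!
The condition `Δ_S Δ_T f = 0` makes `Δ_T f` invariant under `S`,
which integrates to `f (T^k S^m x) = f (S^m x) + f (T^k x) - f x`; hence on any coincidence
`T^k S^m x = T^k' S^m' x` the conditions `f (T^k x) = f (T^k' x)` and `f (S^m x) = f (S^m' x)`
are equivalent, and both are clearly necessary for `f = g + h`.

Conversely, the `T`-invariant part `h` is built orbit by orbit: fix a base point `r` in each class
of the relation `T^k S^m x = T^k' S^m' r`, and let `h x` record the increments of `f` along the
`S`-steps of a path from `r` to `x`. The orbit condition at `r` is exactly what makes this
independent of the path, and then `h ∘ T = h` and `Δ_S h = Δ_S f`.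
-/

open Function (iterate_add_apply iterate_succ_apply iterate_invariant)

section

variable {X : Type*} {S T : X → X}

lemma Function.Commute.iterate_iterate_apply_iterate_iterate (hST : Function.Commute S T)
    (p q u v : ℕ) (x : X) :
    T^[p] (S^[q] (T^[u] (S^[v] x))) = T^[p + u] (S^[q + v] x) := by
  rw [hST.iterate_iterate q u (S^[v] x), ← iterate_add_apply, ← iterate_add_apply]

def JointOrbitRel (S T : X → X) (x y : X) : Prop :=
  ∃ k m k' m' : ℕ, T^[k] (S^[m] x) = T^[k'] (S^[m'] y)

lemma Function.Commute.equivalence_jointOrbitRel (hST : Function.Commute S T) :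
    Equivalence (JointOrbitRel S T) where
  refl _ := ⟨0, 0, 0, 0, rfl⟩
  symm := fun ⟨k, m, k', m', h⟩ => ⟨k', m', k, m, h.symm⟩
  trans := fun {x y z} ⟨k, m, k', m', hxy⟩ ⟨a, b, c, d, hyz⟩ => by
    refine ⟨a + k, b + m, k' + c, m' + d, ?_⟩
    rw [← hST.iterate_iterate_apply_iterate_iterate, hxy,
      hST.iterate_iterate_apply_iterate_iterate, add_comm a, add_comm b,
      ← hST.iterate_iterate_apply_iterate_iterate, hyz, hST.iterate_iterate_apply_iterate_iterate]

lemma Equivalence.exists_rep_fun {α : Type*} {r : α → α → Prop} (hr : Equivalence r) :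
    ∃ rep : α → α, (∀ x, r x (rep x)) ∧ ∀ x y, r x y → rep x = rep y :=
  let s : Setoid α := ⟨r, hr⟩
  ⟨fun x => (Quotient.mk s x).out, fun x => hr.symm (Quotient.mk_out (s := s) x),
    fun _ _ h => congrArg Quotient.out (Quotient.sound (s := s) h)⟩

section Decomposition

variable {f : X → ℝ}

lemma apply_iterate_iterate_eq (hST : Function.Commute S T)
    (hΔ : ∀ x, f (T (S x)) - f (S x) - (f (T x) - f x) = 0) (k m : ℕ) (x : X) :
    f (T^[k] (S^[m] x)) = f (S^[m] x) + f (T^[k] x) - f x := by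
  have hinv (y : X) : f (T (S^[m] y)) - f (S^[m] y) = f (T y) - f y :=
    congrFun (iterate_invariant (g := fun y => f (T y) - f y)
      (funext fun y => sub_eq_zero.mp (hΔ y)) m) y
  induction k with
  | zero => simp
  | succ k ih =>
    have hstep := hinv (T^[k] x)
    rw [hST.iterate_iterate m k x] at hstep
    rw [Function.iterate_succ_apply', Function.iterate_succ_apply']
    linarith

lemma apply_iterate_eq_iff (hST : Function.Commute S T)
    (hΔ : ∀ x, f (T (S x)) - f (S x) - (f (T x) - f x) = 0) {x : X} {k m k' m' : ℕ}
    (he : T^[k] (S^[m] x) = T^[k'] (S^[m'] x)) :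
    f (T^[k] x) = f (T^[k'] x) ↔ f (S^[m] x) = f (S^[m'] x) := by
  have hfe := congrArg f he
  rw [apply_iterate_iterate_eq hST hΔ, apply_iterate_iterate_eq hST hΔ] at hfe
  constructor <;> intro <;> linarith

lemma sub_eq_sub_of_iterate_eq (hST : Function.Commute S T)
    (hΔ : ∀ x, f (T (S x)) - f (S x) - (f (T x) - f x) = 0) {r : X}
    (hOrb : ∀ k m k' m' : ℕ, T^[k] (S^[m] r) = T^[k'] (S^[m'] r) → f (T^[k] r) = f (T^[k'] r))
    {x : X} {k m k' m' a b c d : ℕ} (h₁ : T^[k] (S^[m] x) = T^[k'] (S^[m'] r))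
    (h₂ : T^[a] (S^[b] x) = T^[c] (S^[d] r)) :
    f (S^[m'] r) - f (S^[m] x) = f (S^[d] r) - f (S^[b] x) := by
  have e₁ : T^[a + k] (S^[m] x) = T^[a + k'] (S^[m'] r) := by
    rw [iterate_add_apply, iterate_add_apply, h₁]
  have e₂ : T^[k + a] (S^[b] x) = T^[k + c] (S^[d] r) := by
    rw [iterate_add_apply, iterate_add_apply, h₂]
  have e₃ : T^[a + k'] (S^[b + m'] r) = T^[k + c] (S^[m + d] r) := by
    rw [← hST.iterate_iterate_apply_iterate_iterate, ← h₁,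
      hST.iterate_iterate_apply_iterate_iterate, add_comm a, add_comm b,
      ← hST.iterate_iterate_apply_iterate_iterate, h₂,
      hST.iterate_iterate_apply_iterate_iterate]
  have hf₁ := congrArg f e₁
  have hf₂ := congrArg f e₂
  rw [apply_iterate_iterate_eq hST hΔ, apply_iterate_iterate_eq hST hΔ] at hf₁ hf₂
  have hf₃ := hOrb _ _ _ _ e₃
  rw [add_comm a k] at hf₁
  linarith

lemma exists_invariant_sub_eq_sub (hST : Function.Commute S T)
    (hΔ : ∀ x, f (T (S x)) - f (S x) - (f (T x) - f x) = 0)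
    (hOrb : ∀ (x : X) (k m k' m' : ℕ), T^[k] (S^[m] x) = T^[k'] (S^[m'] x) →
      f (T^[k] x) = f (T^[k'] x)) :
    ∃ h : X → ℝ, (∀ x, h (T x) = h x) ∧ ∀ x, h (S x) - h x = f (S x) - f x := by
  obtain ⟨rep, hrep, hrep_eq⟩ := hST.equivalence_jointOrbitRel.exists_rep_fun
  choose a b c d hw using hrep
  have hpath {x : X} {k m k' m' : ℕ} (he : T^[k] (S^[m] x) = T^[k'] (S^[m'] (rep x))) :
      f (S^[d x] (rep x)) - f (S^[b x] x) = f (S^[m'] (rep x)) - f (S^[m] x) :=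
    sub_eq_sub_of_iterate_eq hST hΔ (hOrb (rep x)) (hw x) he
  refine ⟨fun x => f (S^[d x] (rep x)) - f (S^[b x] x) + f x, fun x => ?_, fun x => ?_⟩
  · have hr : rep (T x) = rep x := hrep_eq _ _ ⟨0, 0, 1, 0, rfl⟩
    have hwT := hw (T x)
    rw [hr, hST.iterate_left (b (T x)) x] at hwT
    have hT := apply_iterate_iterate_eq hST hΔ 1 (b (T x)) x
    rw [Function.iterate_one] at hT
    dsimp only
    rw [hr, hpath (k := a (T x) + 1) hwT, hST.iterate_left (b (T x)) x]
    linarith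
  · have hr : rep (S x) = rep x := hrep_eq _ _ ⟨0, 0, 0, 1, rfl⟩
    have hwS := hw (S x)
    rw [hr, ← iterate_succ_apply] at hwS
    dsimp only
    rw [hr, hpath hwS, iterate_succ_apply]
    ring

end Decomposition

lemma mixed_diff_add_eq_zero {g h : X → ℝ} (hST : Function.Commute S T)
    (hg : ∀ x, g (S x) = g x) (hh : ∀ x, h (T x) = h x) (x : X) :
    (g + h) (T (S x)) - (g + h) (S x) - ((g + h) (T x) - (g + h) x) = 0 := by
  have hgTS : g (T (S x)) = g (T x) := by rw [← hST x, hg]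
  simp only [Pi.add_apply]
  linarith [hg x, hh x, hh (S x)]

lemma add_apply_iterate_eq_of_iterate_eq {g h : X → ℝ} (hST : Function.Commute S T)
    (hg : ∀ x, g (S x) = g x) (hh : ∀ x, h (T x) = h x) {x : X} {k m k' m' : ℕ}
    (he : T^[k] (S^[m] x) = T^[k'] (S^[m'] x)) :
    (g + h) (T^[k] x) = (g + h) (T^[k'] x) := by
  have hgS (n : ℕ) (y : X) : g (S^[n] y) = g y := congrFun (iterate_invariant (funext hg) n) y
  have hhT (n : ℕ) (y : X) : h (T^[n] y) = h y := congrFun (iterate_invariant (funext hh) n) y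
  have hgT : g (T^[k] x) = g (T^[k'] x) :=
    calc g (T^[k] x) = g (T^[k] (S^[m] x)) := by rw [← hST.iterate_iterate m k x, hgS]
      _ = g (T^[k'] (S^[m'] x)) := by rw [he]
      _ = g (T^[k'] x) := by rw [← hST.iterate_iterate m' k' x, hgS]
  simp only [Pi.add_apply, hgT, hhT]

end

theorem stmt_14_general {X : Type*} (S T : X → X) (hcomm : S ∘ T = T ∘ S)
    (f : X → ℝ) :
    ((∃ g h : X → ℝ, (∀ x, g (S x) = g x) ∧ (∀ x, h (T x) = h x) ∧
        ∀ x, f x = g x + h x)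
      ↔ ((∀ x, (f (T (S x)) - f (S x)) - (f (T x) - f x) = 0) ∧
          ∀ (x : X) (k m k' m' : ℕ), T^[k] (S^[m] x) = T^[k'] (S^[m'] x) →
            f (T^[k] x) = f (T^[k'] x)))
    ∧
    ((∃ g h : X → ℝ, (∀ x, g (S x) = g x) ∧ (∀ x, h (T x) = h x) ∧
        ∀ x, f x = g x + h x)
      ↔ ((∀ x, (f (T (S x)) - f (S x)) - (f (T x) - f x) = 0) ∧
          ∀ (x : X) (k m k' m' : ℕ), T^[k] (S^[m] x) = T^[k'] (S^[m'] x) →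
            f (S^[m] x) = f (S^[m'] x))) := by
  have hST : Function.Commute S T := congrFun hcomm
  have hdecomp : (∃ g h : X → ℝ, (∀ x, g (S x) = g x) ∧ (∀ x, h (T x) = h x) ∧
      ∀ x, f x = g x + h x) ↔ ((∀ x, (f (T (S x)) - f (S x)) - (f (T x) - f x) = 0) ∧
        ∀ (x : X) (k m k' m' : ℕ), T^[k] (S^[m] x) = T^[k'] (S^[m'] x) →
          f (T^[k] x) = f (T^[k'] x)) := by
    refine ⟨?_, fun ⟨hΔ, hOrb⟩ => ?_⟩
    · rintro ⟨g, h, hg, hh, hf⟩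
      obtain rfl : f = g + h := funext hf
      exact ⟨mixed_diff_add_eq_zero hST hg hh,
        fun _ _ _ _ _ he => add_apply_iterate_eq_of_iterate_eq hST hg hh he⟩
    · obtain ⟨h, hT, hS⟩ := exists_invariant_sub_eq_sub hST hΔ hOrb
      exact ⟨f - h, h, fun x => by simp only [Pi.sub_apply]; linarith [hS x], hT,
        fun x => by simp⟩
  refine ⟨hdecomp, hdecomp.trans (and_congr_right fun hΔ => ⟨?_, ?_⟩)⟩
  · exact fun hOrb x k m k' m' he => (apply_iterate_eq_iff hST hΔ he).mp (hOrb x k m k' m' he)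
  · exact fun hOrb x k m k' m' he => (apply_iterate_eq_iff hST hΔ he).mpr (hOrb x k m k' m' he)

theorem stmt_14 {X : Type*} [Nonempty X] (S T : X → X) (hcomm : S ∘ T = T ∘ S)
    (f : X → ℝ) :
    ((∃ g h : X → ℝ, (∀ x, g (S x) = g x) ∧ (∀ x, h (T x) = h x) ∧
        ∀ x, f x = g x + h x)
      ↔ ((∀ x, (f (T (S x)) - f (S x)) - (f (T x) - f x) = 0) ∧
          ∀ (x : X) (k m k' m' : ℕ), T^[k] (S^[m] x) = T^[k'] (S^[m'] x) →
            f (T^[k] x) = f (T^[k'] x)))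
    ∧
    ((∃ g h : X → ℝ, (∀ x, g (S x) = g x) ∧ (∀ x, h (T x) = h x) ∧
        ∀ x, f x = g x + h x)
      ↔ ((∀ x, (f (T (S x)) - f (S x)) - (f (T x) - f x) = 0) ∧
          ∀ (x : X) (k m k' m' : ℕ), T^[k] (S^[m] x) = T^[k'] (S^[m'] x) →
            f (S^[m] x) = f (S^[m'] x))) :=
  stmt_14_general S T hcomm f
end

section
/- Let X be a nonempty set and T₁, …, Tₙ : X → X be pairwise commuting and pairwise unrelated maps, i.e. for all i ≠ j, all x ∈ X and all k, l, k', l' ∈ ℕ, the equality Tᵢ^k Tⱼ^l x = Tᵢ^{k'} Tⱼ^{l'} x implies k = k' and l = l'. Then a function f : X → ℝ satisfies Δ_{T₁}⋯Δ_{Tₙ} f = 0 if and only if there exist f₁, …, fₙ : X → ℝ with fⱼ ∘ Tⱼ = fⱼ for each j and f = f₁ + ⋯ + fₙ. -/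
open Function hiding Commute
open LinearMap (ker mem_ker)

section DifferenceOperators

variable {X Y : Type*}

section GrandOrbit

def grandOrbitSetoid (R : X → X) : Setoid X where
  r x y := ∃ a b : ℕ, R^[a] x = R^[b] y
  iseqv :=
    { refl := fun _ => ⟨0, 0, rfl⟩
      symm := fun ⟨a, b, h⟩ => ⟨b, a, h.symm⟩
      trans := fun ⟨a, b, h⟩ ⟨c, d, h'⟩ => ⟨c + a, b + d, by
        rw [iterate_add_apply, h, ← iterate_add_apply, Nat.add_comm c b, iterate_add_apply, h',
          ← iterate_add_apply]⟩ }

variable {R S : X → X}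

theorem grandOrbitSetoid.mk_apply (R : X → X) (x : X) :
    (⟦R x⟧ : Quotient (grandOrbitSetoid R)) = ⟦x⟧ :=
  Quotient.sound ⟨0, 1, rfl⟩

theorem grandOrbitSetoid.exists_comp_mk_eq {β : Type*} {u : X → β} (hu : u ∘ R = u) :
    ∃ v : Quotient (grandOrbitSetoid R) → β, v ∘ Quotient.mk _ = u :=
  ⟨Quotient.lift u fun x y ⟨a, b, h⟩ => by
    rw [← congrFun (iterate_invariant hu a) x, ← congrFun (iterate_invariant hu b) y, comp_apply,
      comp_apply, h], rfl⟩

/-- Only meaningful when `S` commutes with `R` (`semiconj_mk_grandOrbitMap`); going through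
`Quotient.out` avoids carrying that proof in the definition. -/
noncomputable def grandOrbitMap (R S : X → X) :
    Quotient (grandOrbitSetoid R) → Quotient (grandOrbitSetoid R) :=
  fun q => ⟦S q.out⟧

theorem semiconj_mk_grandOrbitMap (h : Function.Commute R S) :
    Semiconj (Quotient.mk _) S (grandOrbitMap R S) := fun x => by
  obtain ⟨a, b, hab⟩ := Quotient.mk_out (s := grandOrbitSetoid R) x
  refine Quotient.sound ⟨b, a, ?_⟩
  rw [(h.iterate_left a).eq, (h.iterate_left b).eq, hab]

end GrandOrbit

def Unrelated (T S : X → X) : Prop :=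
  ∀ (x : X) (k l k' l' : ℕ), T^[k] (S^[l] x) = T^[k'] (S^[l'] x) → k = k' ∧ l = l'

theorem Unrelated.injective_iterate_grandOrbitMap {R S : X → X} (hu : Unrelated R S)
    (hc : Function.Commute R S) (q : Quotient (grandOrbitSetoid R)) :
    Injective fun k => (grandOrbitMap R S)^[k] q := by
  induction q using Quotient.inductionOn with | h x => ?_
  intro k l hkl
  simp only [← (semiconj_mk_grandOrbitMap hc).iterate_right _ x] at hkl
  obtain ⟨a, b, hab⟩ := Quotient.exact hkl
  exact (hu x a k b l hab).2

section Birkhoff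

variable {G : Type*} [AddCommGroup G] {S : X → X} (u : X → G)

theorem birkhoffSum_sub_birkhoffSum_add {y z : X} {a b : ℕ} (h : S^[a] y = S^[b] z) (t : ℕ) :
    birkhoffSum S u (b + t) z - birkhoffSum S u (a + t) y =
      birkhoffSum S u b z - birkhoffSum S u a y := by
  rw [birkhoffSum_add, birkhoffSum_add, h]
  abel

theorem birkhoffSum_sub_birkhoffSum_eq (hS : ∀ z, Injective fun k => S^[k] z) {y z : X}
    {a b a' b' : ℕ} (h : S^[a] y = S^[b] z) (h' : S^[a'] y = S^[b'] z) :
    birkhoffSum S u b z - birkhoffSum S u a y = birkhoffSum S u b' z - birkhoffSum S u a' y := by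
  have hlen : b + a' = b' + a := hS z <| by
    calc S^[b + a'] z = S^[a'] (S^[a] y) := by rw [Nat.add_comm, iterate_add_apply, h]
      _ = S^[a] (S^[a'] y) := by rw [← iterate_add_apply, Nat.add_comm, iterate_add_apply]
      _ = S^[b' + a] z := by rw [h', ← iterate_add_apply, Nat.add_comm]
  rw [← birkhoffSum_sub_birkhoffSum_add u h a', ← birkhoffSum_sub_birkhoffSum_add u h' a, hlen,
    Nat.add_comm a]

end Birkhoff

noncomputable def deltaₗ (T : X → X) : Module.End ℝ (X → ℝ) := LinearMap.funLeft ℝ ℝ T - 1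

theorem deltaₗ_apply (T : X → X) (f : X → ℝ) (x : X) : deltaₗ T f x = f (T x) - f x := rfl

theorem mem_ker_deltaₗ {T : X → X} {f : X → ℝ} : f ∈ ker (deltaₗ T) ↔ f ∘ T = f := by
  rw [mem_ker, deltaₗ, LinearMap.sub_apply, sub_eq_zero]
  rfl

theorem Function.Commute.deltaₗ {S T : X → X} (h : Function.Commute S T) :
    Commute (deltaₗ S) (deltaₗ T) := by
  have hfun : Commute (LinearMap.funLeft ℝ ℝ S) (LinearMap.funLeft ℝ ℝ T) := by
    simp only [Commute, SemiconjBy, Module.End.mul_eq_comp, ← LinearMap.funLeft_comp,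
      h.comp_eq]
  exact (hfun.sub_left (Commute.one_left _)).sub_right
    ((Commute.one_right _).sub_left (Commute.one_left _))

theorem deltaₗ_comp_of_semiconj {π : X → Y} {A : X → X} {B : Y → Y} (h : Semiconj π A B)
    (g : Y → ℝ) : deltaₗ A (g ∘ π) = deltaₗ B g ∘ π := by
  ext x
  simp [deltaₗ_apply, h.eq x]

theorem deltaₗ_surjective {S : X → X} (hS : ∀ y, Injective fun k => S^[k] y) :
    Surjective (deltaₗ S) := by
  intro u
  -- `ρ y` is a base point of the grand orbit of `y`; the preimage is a relative Birkhoff sum,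
  -- well defined by `birkhoffSum_sub_birkhoffSum_eq`.
  obtain ⟨ρ, hρ, hρrel⟩ : ∃ ρ : X → X, (∀ y, ρ (S y) = ρ y) ∧ ∀ y, ∃ b a, S^[b] (ρ y) = S^[a] y :=
    ⟨fun y => (⟦y⟧ : Quotient (grandOrbitSetoid S)).out,
      fun y => congrArg Quotient.out (grandOrbitSetoid.mk_apply S y),
      fun y => Quotient.mk_out (s := grandOrbitSetoid S) y⟩
  choose b a hab using hρrel
  refine ⟨fun y => birkhoffSum S u (b y) (ρ y) - birkhoffSum S u (a y) y, funext fun y => ?_⟩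
  have hSy : S^[a y] (S y) = S^[b y + 1] (ρ (S y)) := by
    rw [← iterate_succ_apply, iterate_succ_apply', ← hab y, ← iterate_succ_apply' S, hρ]
  have hwd := birkhoffSum_sub_birkhoffSum_eq u hS (hab (S y)).symm hSy
  rw [deltaₗ_apply, hwd, hρ, birkhoffSum_succ, hab y]
  linear_combination -birkhoffSum_apply_sub_birkhoffSum S u (a y) y

noncomputable def deltaProd (l : List (X → X)) : Module.End ℝ (X → ℝ) := (l.map deltaₗ).prod

theorem foldr_deltaK_eq_deltaProd (l : List (X → X)) (f : X → ℝ) :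
    l.foldr deltaK f = deltaProd l f := by
  induction l with
  | nil => rfl
  | cons T l ih => rw [List.foldr_cons, ih]; rfl

theorem deltaProd_comp_of_semiconj {π : X → Y} {F : (X → X) → Y → Y} {l : List (X → X)}
    (h : ∀ A ∈ l, Semiconj π A (F A)) (g : Y → ℝ) :
    deltaProd l (g ∘ π) = deltaProd (l.map F) g ∘ π := by
  induction l with
  | nil => rfl
  | cons A l ih =>
    rw [List.forall_mem_cons] at h
    exact (congrArg (deltaₗ A) (ih h.2)).trans (deltaₗ_comp_of_semiconj h.1 _)

theorem deltaProd_surjective {l : List (X → X)} (h : ∀ S ∈ l, ∀ y, Injective fun k => S^[k] y) :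
    Surjective (deltaProd l) := by
  induction l with
  | nil => exact surjective_id
  | cons S l ih =>
    rw [List.forall_mem_cons] at h
    exact (deltaₗ_surjective h.1).comp (ih h.2)

theorem ker_deltaₗ_le_ker_deltaProd {l : List (X → X)} {S : X → X} (hS : S ∈ l)
    (hc : ∀ T ∈ l, Function.Commute S T) : ker (deltaₗ S) ≤ ker (deltaProd l) := by
  obtain ⟨s, t, rfl⟩ := List.append_of_mem hS
  have hcomm : Commute (deltaₗ S) (deltaProd t) :=
    Commute.list_prod_right _ _ <| by simpa using fun T hT => (hc T (by simp [hT])).deltaₗ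
  intro f hf
  rw [mem_ker] at hf ⊢
  rw [deltaProd, List.map_append, List.prod_append, List.map_cons, List.prod_cons]
  change (deltaProd s * (deltaₗ S * deltaProd t)) f = 0
  rw [hcomm.eq, Module.End.mul_apply, Module.End.mul_apply, hf, map_zero, map_zero]

theorem ker_deltaProd_le_iSup {l : List (X → X)} (hc : ∀ S ∈ l, ∀ T ∈ l, Function.Commute S T)
    (hu : l.Pairwise Unrelated) : ker (deltaProd l) ≤ ⨆ T ∈ l, ker (deltaₗ T) := by
  induction l with
  | nil =>
    intro f hf
    rw [show f = 0 from hf]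
    exact zero_mem _
  | cons R l ih =>
    intro f hf
    rw [List.pairwise_cons] at hu
    have hcR : ∀ S ∈ l, Function.Commute R S := fun S hS =>
      hc R List.mem_cons_self S (List.mem_cons_of_mem R hS)
    have hinv : deltaProd l f ∘ R = deltaProd l f := mem_ker_deltaₗ.mp hf
    obtain ⟨v, hv⟩ := grandOrbitSetoid.exists_comp_mk_eq hinv
    obtain ⟨g, rfl⟩ := deltaProd_surjective (l := l.map (grandOrbitMap R)) (by
      simpa using fun S hS => (hu.1 S hS).injective_iterate_grandOrbitMap (hcR S hS)) v
    have hg : deltaProd l (g ∘ Quotient.mk _) = deltaProd l f := by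
      rw [deltaProd_comp_of_semiconj fun S hS => semiconj_mk_grandOrbitMap (hcR S hS), hv]
    have hrest : f - g ∘ Quotient.mk _ ∈ ⨆ T ∈ l, ker (deltaₗ T) := by
      refine ih (fun S hS T hT => hc S (List.mem_cons_of_mem R hS) T (List.mem_cons_of_mem R hT))
        hu.2 ?_
      rw [mem_ker, map_sub, hg, sub_self]
    have hhead : g ∘ Quotient.mk _ ∈ ker (deltaₗ R) :=
      mem_ker_deltaₗ.mpr (funext fun x => congrArg g (grandOrbitSetoid.mk_apply R x))
    rw [← add_sub_cancel (g ∘ Quotient.mk _) f]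
    exact add_mem (Submodule.mem_iSup_of_mem R (Submodule.mem_iSup_of_mem List.mem_cons_self hhead))
      (biSup_mono (f := fun T => ker (deltaₗ T)) (fun T => List.mem_cons_of_mem R) hrest)

theorem ker_deltaProd_eq_iSup {l : List (X → X)} (hc : ∀ S ∈ l, ∀ T ∈ l, Function.Commute S T)
    (hu : l.Pairwise Unrelated) : ker (deltaProd l) = ⨆ T ∈ l, ker (deltaₗ T) :=
  le_antisymm (ker_deltaProd_le_iSup hc hu) <|
    iSup₂_le fun S hS => ker_deltaₗ_le_ker_deltaProd hS (hc S hS)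

theorem mem_iSup_ker_deltaₗ_iff {ι : Type*} [Fintype ι] (T : ι → X → X) (f : X → ℝ) :
    f ∈ ⨆ j, ker (deltaₗ (T j)) ↔
      ∃ g : ι → X → ℝ, (∀ j, g j ∘ T j = g j) ∧ ∀ x, f x = ∑ j, g j x := by
  constructor
  · intro hf
    obtain ⟨μ, hμ⟩ := (Submodule.mem_iSup_finset_iff_exists_sum (s := Finset.univ) _ f).mp
      (by simpa using hf)
    exact ⟨fun j => μ j, fun j => mem_ker_deltaₗ.mp (μ j).2, fun x => by
      rw [← hμ, Finset.sum_apply]⟩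
  · rintro ⟨g, hg, hf⟩
    rw [show f = ∑ j, g j from funext fun x => by rw [hf, Finset.sum_apply]]
    exact Submodule.sum_mem_iSup fun j => mem_ker_deltaₗ.mpr (hg j)

end DifferenceOperators

theorem stmt_16_general {X : Type*} (n : ℕ) (T : Fin n → X → X)
    (hcomm : ∀ i j, T i ∘ T j = T j ∘ T i)
    (hunrel : ∀ i j, i ≠ j → ∀ (x : X) (k l k' l' : ℕ),
      (T i)^[k] ((T j)^[l] x) = (T i)^[k'] ((T j)^[l'] x) → k = k' ∧ l = l')
    (f : X → ℝ) :
    ((List.ofFn T).foldr deltaK f = 0 ↔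
      ∃ g : Fin n → X → ℝ, (∀ j, g j ∘ T j = g j) ∧ ∀ x, f x = ∑ j, g j x) := by
  have hc : ∀ S ∈ List.ofFn T, ∀ R ∈ List.ofFn T, Function.Commute S R := by
    simp only [List.mem_ofFn]
    rintro _ ⟨i, rfl⟩ _ ⟨j, rfl⟩
    exact congrFun (hcomm i j)
  have hu : (List.ofFn T).Pairwise Unrelated :=
    List.pairwise_ofFn.mpr fun i j hij => hunrel i j hij.ne
  have hker : ker (deltaProd (List.ofFn T)) = ⨆ j, ker (deltaₗ (T j)) := by
    rw [ker_deltaProd_eq_iSup hc hu]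
    simp only [List.mem_ofFn, iSup_exists]
    rw [iSup_comm]
    simp only [iSup_iSup_eq_right]
  rw [foldr_deltaK_eq_deltaProd, ← mem_ker, hker, mem_iSup_ker_deltaₗ_iff]

theorem stmt_16 {X : Type*} [Nonempty X] (n : ℕ) (T : Fin n → X → X)
    (hcomm : ∀ i j, T i ∘ T j = T j ∘ T i)
    (hunrel : ∀ i j, i ≠ j → ∀ (x : X) (k l k' l' : ℕ),
      (T i)^[k] ((T j)^[l] x) = (T i)^[k'] ((T j)^[l'] x) → k = k' ∧ l = l')
    (f : X → ℝ) :
    ((List.ofFn T).foldr deltaK f = 0 ↔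
      ∃ g : Fin n → X → ℝ, (∀ j, g j ∘ T j = g j) ∧ ∀ x, f x = ∑ j, g j x) :=
  stmt_16_general n T hcomm hunrel f
end

section
/- Let α₁, …, αₙ ∈ ℝ be pairwise incommensurable, i.e. αᵢℤ ∩ αⱼℤ = {0} for all i ≠ j. Then a function f : ℝ → ℝ satisfies Δ_{α₁}⋯Δ_{αₙ} f = 0 if and only if there exist functions f₁, …, fₙ : ℝ → ℝ with fⱼ αⱼ-periodic for each j and f = f₁ + ⋯ + fₙ. -/
/-!
The easy direction holds because the operators `Δ_α` commute and `Δ_{αⱼ}` kills `fⱼ`.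
For the converse, induct on `n`: if `Δ_{α₀} f = h₁ + ⋯ + hₙ` with `hⱼ` `αⱼ`-periodic, solve
`Δ_{α₀} Gⱼ = hⱼ` with `Gⱼ` again `αⱼ`-periodic; then `f - ∑ Gⱼ` is `α₀`-periodic. The equation
`Δ_b G = h` lives on `A ⧸ ℤa`, where incommensurability makes translation by `b` a free `ℤ`-action,
so it is solved by prescribing `G` on one representative of each orbit and summing `h` along it.
-/

open Function

theorem Int.exists_add_one_sub_eq {M : Type*} [AddCommGroup M] (d : ℤ → M) :
    ∃ S : ℤ → M, ∀ k, S (k + 1) - S k = d k := by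
  refine ⟨fun k => ∑ i ∈ Finset.Ico 0 k, d i - ∑ i ∈ Finset.Ico k 0, d i, fun k => ?_⟩
  dsimp only
  rcases le_or_gt 0 k with hk | hk
  · rw [← Finset.sum_Ico_add_eq_sum_Ico_add_one hk, Finset.Ico_eq_empty_of_le hk,
      Finset.Ico_eq_empty_of_le (show (0 : ℤ) ≤ k + 1 by omega)]
    abel
  · rw [← Finset.insert_Ico_add_one_left_eq_Ico hk, Finset.sum_insert (by simp),
      Finset.Ico_eq_empty_of_le hk.le, Finset.Ico_eq_empty_of_le (show k + 1 ≤ 0 by omega)]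
    abel

section AddCommGroup

variable {A : Type*} [AddCommGroup A] {a b : A}

/-- `r x` is a representative of `x` modulo `ℤa + ℤb`, and `K x` the coefficient of `b` in
`x - r x`, which is unique by `hab`. -/
theorem exists_orbit_coords (hab : ∀ k : ℤ, k • b ∈ AddSubgroup.zmultiples a → k = 0) :
    ∃ (r : A → A) (K : A → ℤ), Periodic r a ∧ Periodic r b ∧ Periodic K a ∧
      (∀ x, K (x + b) = K x + 1) ∧ ∀ x, x - (r x + K x • b) ∈ AddSubgroup.zmultiples a := by
  set G := AddSubgroup.zmultiples a ⊔ AddSubgroup.zmultiples b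
  let r : A → A := fun x => (x : A ⧸ G).out
  have hr : ∀ x, x - r x ∈ G := fun x => by
    simpa [neg_add_eq_sub] using QuotientAddGroup.eq.1 (Quotient.out_eq (x : A ⧸ G))
  have hr_add : ∀ x, ∀ c ∈ G, r (x + c) = r x := fun x c hc => by
    simp only [r, QuotientAddGroup.eq.2 (by simpa using neg_mem hc : -(x + c) + x ∈ G)]
  have hK : ∀ x, ∃ k : ℤ, x - (r x + k • b) ∈ AddSubgroup.zmultiples a := fun x => by
    obtain ⟨y, hy, z, ⟨k, rfl⟩, hyz⟩ := AddSubgroup.mem_sup.1 (hr x)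
    exact ⟨k, by rwa [← sub_sub, ← hyz, add_sub_cancel_right]⟩
  choose K hK using hK
  have hK_unique : ∀ x k, x - (r x + k • b) ∈ AddSubgroup.zmultiples a → K x = k := fun x k hk =>
    sub_eq_zero.1 <| hab _ <| by
      rw [sub_zsmul]; convert sub_mem hk (hK x) using 1; abel
  have hra : Periodic r a :=
    fun x => hr_add x a (AddSubgroup.mem_sup_left (AddSubgroup.mem_zmultiples a))
  have hrb : Periodic r b :=
    fun x => hr_add x b (AddSubgroup.mem_sup_right (AddSubgroup.mem_zmultiples b))
  refine ⟨r, K, hra, hrb, fun x => hK_unique _ _ ?_, fun x => hK_unique _ _ ?_, hK⟩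
  · rw [hra x, add_sub_right_comm]
    exact add_mem (hK x) (AddSubgroup.mem_zmultiples a)
  · rw [hrb x, add_zsmul, one_zsmul, ← add_assoc, add_sub_add_right_eq_sub]
    exact hK x

theorem exists_periodic_sub_eq {M : Type*} [AddCommGroup M]
    (hab : ∀ k : ℤ, k • b ∈ AddSubgroup.zmultiples a → k = 0) {h : A → M} (hh : Periodic h a) :
    ∃ g : A → M, Periodic g a ∧ ∀ x, g (x + b) - g x = h x := by
  obtain ⟨r, K, hra, hrb, hKa, hKb, hmem⟩ := exists_orbit_coords hab
  choose S hS using fun y => Int.exists_add_one_sub_eq fun k => h (y + k • b)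
  refine ⟨fun x => S (r x) (K x), fun x => by simp only [hra x, hKa x], fun x => ?_⟩
  obtain ⟨m, hm⟩ := AddSubgroup.mem_zmultiples_iff.1 (hmem x)
  simp only [hrb x, hKb x, hS]
  rw [← hh.zsmul m, hm, add_sub_cancel]

end AddCommGroup

def Incommensurable (a b : ℝ) : Prop :=
  {x : ℝ | ∃ m : ℤ, x = m * a} ∩ {x : ℝ | ∃ k : ℤ, x = k * b} = {0}

theorem Incommensurable.eq_zero_of_zsmul_mem {a b : ℝ} (hab : Incommensurable a b) (hb : b ≠ 0)
    {k : ℤ} (hk : k • b ∈ AddSubgroup.zmultiples a) : k = 0 := by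
  obtain ⟨m, hm : m • a = k • b⟩ := hk
  have hkb : (k : ℝ) * b ∈ ({0} : Set ℝ) :=
    hab ▸ ⟨⟨m, by rw [← zsmul_eq_mul, ← hm, zsmul_eq_mul]⟩, ⟨k, rfl⟩⟩
  exact_mod_cast (mul_eq_zero.1 hkb).resolve_right hb

theorem deltaOp_left_comm (a b : ℝ) (f : ℝ → ℝ) :
    deltaOp a (deltaOp b f) = deltaOp b (deltaOp a f) := by
  funext x
  simp only [deltaOp, add_right_comm x a b]
  ring

instance : LeftCommutative deltaOp := ⟨deltaOp_left_comm⟩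

theorem deltaOp_sum {ι : Type*} (s : Finset ι) (a : ℝ) (g : ι → ℝ → ℝ) :
    deltaOp a (∑ j ∈ s, g j) = ∑ j ∈ s, deltaOp a (g j) := by
  funext x
  simp only [deltaOp, Finset.sum_apply, Finset.sum_sub_distrib]

theorem foldr_deltaOp_sum {ι : Type*} (s : Finset ι) (l : List ℝ) (g : ι → ℝ → ℝ) :
    l.foldr deltaOp (∑ j ∈ s, g j) = ∑ j ∈ s, l.foldr deltaOp (g j) := by
  induction l with
  | nil => rfl
  | cons a l ih => simp only [List.foldr_cons, ih, deltaOp_sum]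

theorem foldr_deltaOp_zero (l : List ℝ) : l.foldr deltaOp 0 = 0 := by
  induction l with
  | nil => rfl
  | cons a l ih =>
    rw [List.foldr_cons, ih]
    funext x
    simp only [deltaOp, Pi.zero_apply, sub_self]

theorem deltaOp_foldr_deltaOp (a : ℝ) (l : List ℝ) (f : ℝ → ℝ) :
    deltaOp a (l.foldr deltaOp f) = l.foldr deltaOp (deltaOp a f) :=
  calc deltaOp a (l.foldr deltaOp f) = (a :: l).foldr deltaOp f := rfl
    _ = (l ++ [a]).foldr deltaOp f := ((List.perm_append_singleton a l).foldr_eq f).symm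
    _ = l.foldr deltaOp (deltaOp a f) := List.foldr_append

theorem foldr_deltaOp_eq_zero_of_periodic {a : ℝ} {l : List ℝ} (ha : a ∈ l) {g : ℝ → ℝ}
    (hg : Periodic g a) : l.foldr deltaOp g = 0 := by
  have hga : deltaOp a g = 0 := funext fun x => sub_eq_zero.2 (hg x)
  rw [(List.perm_cons_erase ha).foldr_eq, List.foldr_cons, deltaOp_foldr_deltaOp, hga,
    foldr_deltaOp_zero]

theorem foldr_deltaOp_sum_eq_zero {n : ℕ} (α : Fin n → ℝ) {g : Fin n → ℝ → ℝ}
    (hg : ∀ j, Periodic (g j) (α j)) : (List.ofFn α).foldr deltaOp (∑ j, g j) = 0 := by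
  rw [foldr_deltaOp_sum]
  exact Finset.sum_eq_zero fun j _ =>
    foldr_deltaOp_eq_zero_of_periodic (List.mem_ofFn.2 ⟨j, rfl⟩) (hg j)

theorem exists_periodic_decomp_cons {n : ℕ} {a : ℝ} {α : Fin n → ℝ}
    (hinc : ∀ j, Incommensurable (α j) a) {f : ℝ → ℝ} {h : Fin n → ℝ → ℝ}
    (hh : ∀ j, Periodic (h j) (α j)) (hf : deltaOp a f = ∑ j, h j) :
    ∃ g : Fin (n + 1) → ℝ → ℝ,
      (∀ j, Periodic (g j) ((Fin.cons a α : Fin (n + 1) → ℝ) j)) ∧ f = ∑ j, g j := by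
  by_cases ha : a = 0
  · refine ⟨Fin.cons f 0, fun j => Fin.cases (by simp [ha]) (fun j => by simp) j, ?_⟩
    simp [Fin.sum_cons]
  choose G hGa hGh using fun j =>
    exists_periodic_sub_eq (fun k => (hinc j).eq_zero_of_zsmul_mem ha) (hh j)
  have hfG : Periodic (f - ∑ j, G j) a := fun x => by
    have hfx : f (x + a) - f x = ∑ j, (G j (x + a) - G j x) := by
      simpa [deltaOp, hGh] using congrFun hf x
    simp only [Pi.sub_apply, Finset.sum_apply]
    rw [Finset.sum_sub_distrib] at hfx
    linarith
  refine ⟨Fin.cons (f - ∑ j, G j) G, fun j => Fin.cases hfG (fun j => by simpa using hGa j) j, ?_⟩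
  rw [Fin.sum_cons, sub_add_cancel]

theorem exists_periodic_decomp_of_foldr_deltaOp_eq_zero {n : ℕ} {α : Fin n → ℝ}
    (hinc : Pairwise fun i j => Incommensurable (α i) (α j)) {f : ℝ → ℝ}
    (hf : (List.ofFn α).foldr deltaOp f = 0) :
    ∃ g : Fin n → ℝ → ℝ, (∀ j, Periodic (g j) (α j)) ∧ f = ∑ j, g j := by
  induction n generalizing f with
  | zero => exact ⟨finZeroElim, finZeroElim, by simpa using hf⟩
  | succ n ih =>
    obtain ⟨a, α, rfl⟩ : ∃ a α', α = Fin.cons a α' := ⟨_, _, (Fin.cons_self_tail α).symm⟩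
    simp only [List.ofFn_succ, Fin.cons_zero, Fin.cons_succ, List.foldr_cons,
      deltaOp_foldr_deltaOp] at hf
    obtain ⟨h, hh, hfh⟩ := ih (fun i j hij => hinc ((Fin.succ_injective _).ne hij)) hf
    exact exists_periodic_decomp_cons (fun j => hinc (Fin.succ_ne_zero j)) hh hfh

theorem stmt_17 (n : ℕ) (α : Fin n → ℝ)
    (hinc : ∀ i j, i ≠ j →
      {x : ℝ | ∃ m : ℤ, x = m * α i} ∩ {x : ℝ | ∃ k : ℤ, x = k * α j} = {0})
    (f : ℝ → ℝ) :
    ((List.ofFn α).foldr deltaOp f = 0 ↔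
      ∃ g : Fin n → ℝ → ℝ, (∀ j x, g j (x + α j) = g j x) ∧ ∀ x, f x = ∑ j, g j x) := by
  constructor
  · intro hf
    obtain ⟨g, hg, rfl⟩ := exists_periodic_decomp_of_foldr_deltaOp_eq_zero (fun i j => hinc i j) hf
    exact ⟨g, hg, fun x => Finset.sum_apply x _ g⟩
  · rintro ⟨g, hg, hfg⟩
    obtain rfl : f = ∑ j, g j := funext fun x => (hfg x).trans (Finset.sum_apply x _ g).symm
    exact foldr_deltaOp_sum_eq_zero α hg
end

section
/- Let α₁, …, αₙ ∈ ℝ be nonzero and pairwise incommensurable, i.e. αᵢℤ ∩ αⱼℤ = {0} for all i ≠ j. Suppose f₁, …, fₙ and g₁, …, gₙ are essentially bounded Lebesgue-measurable functions on ℝ such that for each j, fⱼ(x + αⱼ) = fⱼ(x) and gⱼ(x + αⱼ) = gⱼ(x) for almost every x ∈ ℝ, and f₁ + ⋯ + fₙ = g₁ + ⋯ + gₙ almost everywhere. Then for each j there is a constant cⱼ ∈ ℝ with fⱼ − gⱼ = cⱼ almost everywhere; that is, a periodic decomposition in L^∞(ℝ) with incommensurable periods is unique up to additive constants. -/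
/-! Put `hᵢ = fᵢ - gᵢ`: these are bounded, measurable, a.e. `αᵢ`-periodic, and `∑ hᵢ = 0` a.e.
Induct on the number of summands. The difference operator `Δ_[αₖ]` kills `hₖ` and leaves a
shorter relation of the same kind, so each `Δ_[αₖ] hᵢ` (`i ≠ k`) is a.e. a constant, which must
vanish since `hᵢ` is bounded. Hence `hᵢ` has the incommensurable a.e. periods `αᵢ` and `αₖ`: it
descends to the circle `ℝ ⧸ αᵢℤ`, where it is invariant under the irrational rotation by `αₖ`,
so it is a.e. constant by ergodicity. Finally `hₖ = -∑_{i ≠ k} hᵢ` is a.e. constant too. -/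

open MeasureTheory Set Filter Function fwdDiff AddSubgroup

section aePeriods

variable {G E : Type*} [MeasurableSpace G] [AddGroup G] [MeasurableAdd G] {μ : Measure G}
  [μ.IsAddRightInvariant]

theorem ae_comp_add_right (t : G) {p : G → Prop} (h : ∀ᵐ x ∂μ, p x) : ∀ᵐ x ∂μ, p (x + t) :=
  (measurePreserving_add_right μ t).quasiMeasurePreserving.ae h

variable (μ) in
def aePeriods (u : G → E) : AddSubgroup G where
  carrier := {t | ∀ᵐ x ∂μ, u (x + t) = u x}
  zero_mem' := by simp
  add_mem' {s t} hs ht := by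
    filter_upwards [hs, ae_comp_add_right s ht] with x hs ht
    rw [← add_assoc, ht, hs]
  neg_mem' {t} ht := by
    filter_upwards [ae_comp_add_right (-t) ht] with x ht
    rw [neg_add_cancel_right] at ht
    exact ht.symm

theorem mem_aePeriods {u : G → E} {t : G} : t ∈ aePeriods μ u ↔ ∀ᵐ x ∂μ, u (x + t) = u x :=
  Iff.rfl

theorem ae_forall_add_zsmul_eq {u : G → E} {t : G} (ht : t ∈ aePeriods μ u) :
    ∀ᵐ x ∂μ, ∀ n : ℤ, u (x + n • t) = u x :=
  ae_all_iff.2 fun n => zsmul_mem ht n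

end aePeriods

section fwdDiff

variable {G : Type*} [MeasurableSpace G] [AddCommGroup G] [MeasurableAdd G] {μ : Measure G}
  [μ.IsAddRightInvariant] {u : G → ℝ}

theorem Measurable.fwdDiff (hu : Measurable u) (t : G) : Measurable (Δ_[t] u) :=
  (hu.comp (measurable_add_const t)).sub hu

theorem ae_abs_fwdDiff_le {C : ℝ} (hu : ∀ᵐ x ∂μ, |u x| ≤ C) (t : G) :
    ∀ᵐ x ∂μ, |Δ_[t] u x| ≤ 2 * C := by
  filter_upwards [hu, ae_comp_add_right t hu] with x hx hxt
  calc |u (x + t) - u x| ≤ |u (x + t)| + |u x| := abs_sub _ _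
    _ ≤ 2 * C := by linarith

theorem fwdDiff_mem_aePeriods {t : G} (ht : t ∈ aePeriods μ u) (s : G) :
    t ∈ aePeriods μ (Δ_[s] u) := by
  filter_upwards [ht, ae_comp_add_right s ht] with x hx hxs
  simp only [fwdDiff, add_right_comm x t s, hxs, hx]

theorem fwdDiff_ae_eq_zero_iff {t : G} : Δ_[t] u =ᵐ[μ] 0 ↔ t ∈ aePeriods μ u := by
  simp only [EventuallyEq, fwdDiff, Pi.zero_apply, sub_eq_zero, mem_aePeriods]

/-- `u (x + N • t) - u x = N * c` stays bounded. -/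
theorem eq_zero_of_fwdDiff_ae_eq_const [NeZero μ] {C c : ℝ} (hu : ∀ᵐ x ∂μ, |u x| ≤ C) {t : G}
    (hc : ∀ᵐ x ∂μ, Δ_[t] u x = c) : c = 0 := by
  have hgrowth (N : ℕ) : ∀ᵐ x ∂μ, u (x + N • t) - u x = N * c := by
    induction N with
    | zero => simp
    | succ N ih =>
      filter_upwards [ih, ae_comp_add_right (N • t) hc] with x hN hstep
      rw [fwdDiff, add_assoc, ← succ_nsmul] at hstep
      push_cast
      linarith
  by_contra hc0
  obtain ⟨N, hN⟩ := exists_nat_gt (2 * C / |c|)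
  obtain ⟨x, hx, hxN, hbound⟩ :=
    (hu.and ((ae_comp_add_right (N • t) hu).and (hgrowth N))).exists
  have : N * |c| ≤ 2 * C := by
    calc N * |c| = |u (x + N • t) - u x| := by rw [hbound, abs_mul, Nat.abs_cast]
      _ ≤ |u (x + N • t)| + |u x| := abs_sub _ _
      _ ≤ 2 * C := by linarith
  rw [div_lt_iff₀ (abs_pos.2 hc0)] at hN
  linarith

end fwdDiff

namespace AddCircle

theorem addOrderOf_coe_eq_zero {T a : ℝ} (ha : a ≠ 0)
    (hdisj : Disjoint (zmultiples T) (zmultiples a)) : addOrderOf (a : AddCircle T) = 0 := by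
  refine addOrderOf_eq_zero_iff'.2 fun n hn hna => ?_
  obtain ⟨k, hk⟩ := (coe_eq_zero_iff T).1 (by rwa [coe_nsmul])
  have : n • a = 0 := disjoint_def.1 hdisj ⟨k, hk⟩ (nsmul_mem (mem_zmultiples a) n)
  exact ha ((smul_eq_zero.1 this).resolve_left hn.ne')

variable {T : ℝ} [Fact (0 < T)]

theorem ae_of_ae_coe {p : AddCircle T → Prop} (hp : MeasurableSet {y | p y})
    (h : ∀ᵐ x : ℝ, p x) : ∀ᵐ y : AddCircle T, p y := by
  rw [← (AddCircle.measurePreserving_mk T 0).map_eq,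
    ae_map_iff AddCircle.measurable_mk'.aemeasurable hp]
  exact ae_restrict_of_ae h

theorem ae_coe_of_ae {p : AddCircle T → Prop} (h : ∀ᵐ y : AddCircle T, p y) :
    ∀ᵐ x : ℝ, p x := by
  rw [← Measure.restrict_univ (μ := volume), ← iUnion_Ioc_add_zsmul (Fact.out : 0 < T) 0,
    ae_restrict_iUnion_iff]
  intro n
  rw [add_one_zsmul, ← add_assoc]
  exact (AddCircle.measurePreserving_mk T _).quasiMeasurePreserving.ae h

theorem liftIoc_coe_ae_eq {u : ℝ → ℝ} (hT : T ∈ aePeriods volume u) :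
    ∀ᵐ x : ℝ, liftIoc T 0 u x = u x := by
  filter_upwards [ae_forall_add_zsmul_eq hT] with x hx
  obtain ⟨n, hn, -⟩ := existsUnique_add_zsmul_mem_Ioc (Fact.out : 0 < T) x 0
  rw [← hx n, ← liftIoc_coe_apply (f := u) hn, coe_add, coe_zsmul, coe_period, smul_zero,
    add_zero]

end AddCircle

/-- `u` descends to `ℝ ⧸ Tℤ`, where it is invariant under the rotation by `b`, which is
ergodic. -/
theorem ae_eq_const_of_mem_aePeriods_of_pos {u : ℝ → ℝ} (hu : Measurable u) {T b : ℝ}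
    (hT : 0 < T) (hb : b ≠ 0) (hdisj : Disjoint (zmultiples T) (zmultiples b))
    (hTu : T ∈ aePeriods volume u) (hbu : b ∈ aePeriods volume u) :
    ∃ c, u =ᵐ[volume] fun _ => c := by
  have : Fact (0 < T) := ⟨hT⟩
  set F := AddCircle.liftIoc T 0 u
  have hF : Measurable F :=
    hu.comp (measurable_subtype_coe.comp (AddCircle.measurableEquivIoc T 0).measurable)
  have hFu : (fun x : ℝ => F x) =ᵐ[volume] u := AddCircle.liftIoc_coe_ae_eq hTu
  have hFb : F ∘ (fun y => (b : AddCircle T) + y) =ᵐ[volume] F := by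
    refine AddCircle.ae_of_ae_coe
      (measurableSet_eq_fun (hF.comp (measurable_const_add _)) hF) ?_
    filter_upwards [hFu, ae_comp_add_right b hFu, hbu] with x hx hxb hb
    rw [comp_apply, ← AddCircle.coe_add, add_comm, hxb, hx, hb]
  obtain ⟨c, hc⟩ := ((AddCircle.ergodic_add_left).2
    (AddCircle.addOrderOf_coe_eq_zero hb hdisj)).ae_eq_const_of_ae_eq_comp₀ hF.nullMeasurable hFb
  exact ⟨c, hFu.symm.trans (AddCircle.ae_coe_of_ae hc)⟩

theorem ae_eq_const_of_mem_aePeriods {u : ℝ → ℝ} (hu : Measurable u) {a b : ℝ}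
    (ha : a ≠ 0) (hb : b ≠ 0) (hdisj : Disjoint (zmultiples a) (zmultiples b))
    (hau : a ∈ aePeriods volume u) (hbu : b ∈ aePeriods volume u) :
    ∃ c, u =ᵐ[volume] fun _ => c :=
  ae_eq_const_of_mem_aePeriods_of_pos hu (abs_pos.2 ha) hb
    (hdisj.mono_left (zmultiples_le.2 (abs_mem_iff.2 (mem_zmultiples a))))
    (abs_mem_iff.2 hau) hbu

theorem ae_eq_const_of_sum_ae_eq_zero {ι : Type*} (s : Finset ι) {a : ι → ℝ}
    (ha : ∀ i ∈ s, a i ≠ 0)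
    (hdisj : (s : Set ι).Pairwise fun i j => Disjoint (zmultiples (a i)) (zmultiples (a j)))
    {u : ι → ℝ → ℝ} (hmeas : ∀ i ∈ s, Measurable (u i))
    (hbdd : ∀ i ∈ s, ∃ C, ∀ᵐ x, |u i x| ≤ C) (hper : ∀ i ∈ s, a i ∈ aePeriods volume (u i))
    (hsum : ∀ᵐ x, ∑ i ∈ s, u i x = 0) :
    ∀ i ∈ s, ∃ c, u i =ᵐ[volume] fun _ => c := by
  classical
  induction s using Finset.induction_on generalizing u with
  | empty => simp
  | insert k s hk ih =>
    simp only [Finset.mem_insert, forall_eq_or_imp] at ha hmeas hbdd hper ⊢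
    rw [Finset.coe_insert, Set.pairwise_insert_of_symm] at hdisj
    -- Differencing along `a k` kills `u k` and leaves a shorter sum of the same kind.
    have hdiff : ∀ i ∈ s, ∃ c, Δ_[a k] (u i) =ᵐ[volume] fun _ => c := by
      refine ih ha.2 hdisj.1 (fun i hi => (hmeas.2 i hi).fwdDiff _) (fun i hi => ?_)
        (fun i hi => fwdDiff_mem_aePeriods (hper.2 i hi) _) ?_
      · obtain ⟨C, hC⟩ := hbdd.2 i hi
        exact ⟨2 * C, ae_abs_fwdDiff_le hC _⟩
      · filter_upwards [hsum, ae_comp_add_right (a k) hsum,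
          fwdDiff_ae_eq_zero_iff.2 hper.1] with x hx hxk hkk
        simp only [Finset.sum_insert hk] at hx hxk
        simp only [fwdDiff, Finset.sum_sub_distrib, Pi.zero_apply] at hkk ⊢
        linarith
    have hconst : ∀ i ∈ s, ∃ c, u i =ᵐ[volume] fun _ => c := by
      intro i hi
      obtain ⟨c, hc⟩ := hdiff i hi
      obtain ⟨C, hC⟩ := hbdd.2 i hi
      rw [eq_zero_of_fwdDiff_ae_eq_const hC hc] at hc
      exact ae_eq_const_of_mem_aePeriods (hmeas.2 i hi) (ha.2 i hi) ha.1
        ((hdisj.2 i hi (by rintro rfl; exact hk hi)).symm) (hper.2 i hi)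
        (fwdDiff_ae_eq_zero_iff.1 hc)
    refine ⟨?_, hconst⟩
    choose! c hc using hconst
    refine ⟨-∑ i ∈ s, c i, ?_⟩
    filter_upwards [hsum, (eventually_all_finset s).2 hc] with x hx hxc
    rw [Finset.sum_insert hk, Finset.sum_congr rfl hxc] at hx
    linarith

theorem disjoint_zmultiples_of_inter_eq {R : Type*} [Ring R] {a b : R}
    (h : {x : R | ∃ m : ℤ, x = m * a} ∩ {x : R | ∃ k : ℤ, x = k * b} = {0}) :
    Disjoint (zmultiples a) (zmultiples b) := by
  refine disjoint_def.2 fun {x} hxa hxb => ?_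
  obtain ⟨m, rfl⟩ := mem_zmultiples_iff.1 hxa
  obtain ⟨k, hk⟩ := mem_zmultiples_iff.1 hxb
  have hx : m • a ∈ ({0} : Set R) :=
    h ▸ ⟨⟨m, zsmul_eq_mul a m⟩, ⟨k, by rw [← hk, zsmul_eq_mul]⟩⟩
  exact hx

theorem stmt_19 (n : ℕ) (α : Fin n → ℝ) (hα : ∀ j, α j ≠ 0)
    (hinc : ∀ i j, i ≠ j →
      {x : ℝ | ∃ m : ℤ, x = m * α i} ∩ {x : ℝ | ∃ k : ℤ, x = k * α j} = {0})
    (f g : Fin n → ℝ → ℝ)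
    (hfmeas : ∀ j, Measurable (f j)) (hgmeas : ∀ j, Measurable (g j))
    (hfbdd : ∀ j, ∃ C : ℝ, ∀ᵐ x ∂(volume : Measure ℝ), |f j x| ≤ C)
    (hgbdd : ∀ j, ∃ C : ℝ, ∀ᵐ x ∂(volume : Measure ℝ), |g j x| ≤ C)
    (hfper : ∀ j, ∀ᵐ x ∂(volume : Measure ℝ), f j (x + α j) = f j x)
    (hgper : ∀ j, ∀ᵐ x ∂(volume : Measure ℝ), g j (x + α j) = g j x)
    (heq : ∀ᵐ x ∂(volume : Measure ℝ), ∑ j, f j x = ∑ j, g j x) :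
    ∀ j, ∃ c : ℝ, ∀ᵐ x ∂(volume : Measure ℝ), f j x - g j x = c := by
  have hbdd (j : Fin n) : ∃ C, ∀ᵐ x, |f j x - g j x| ≤ C := by
    obtain ⟨C, hC⟩ := hfbdd j
    obtain ⟨D, hD⟩ := hgbdd j
    refine ⟨C + D, ?_⟩
    filter_upwards [hC, hD] with x hCx hDx
    exact (abs_sub _ _).trans (add_le_add hCx hDx)
  have hper (j : Fin n) : α j ∈ aePeriods volume fun x => f j x - g j x := by
    filter_upwards [hfper j, hgper j] with x hf hg
    rw [hf, hg]
  have hsum : ∀ᵐ x, ∑ j, (f j x - g j x) = 0 := by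
    filter_upwards [heq] with x hx
    rw [Finset.sum_sub_distrib, hx, sub_self]
  intro j
  exact ae_eq_const_of_sum_ae_eq_zero Finset.univ (fun i _ => hα i)
    (fun i _ j _ hij => disjoint_zmultiples_of_inter_eq (hinc i j hij))
    (fun i _ => (hfmeas i).sub (hgmeas i)) (fun i _ => hbdd i) (fun i _ => hper i) hsum j
    (Finset.mem_univ j)
end
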